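/- arXiv:2310.08813 — 12 statements merged into one kernel-verified Lean document; each statement's English description precedes it below -/
import Mathlib

section
/- Let p ∈ (0,1] and θ ∈ (−π, π/2], or p ∈ (1,2] and θ ∈ (−π, 0]. Then the set {(cos θ − cos x)/(x − θ)^p : θ < x < π} is bounded above, its supremum A_{p,θ} is strictly positive, and cos x ≥ cos θ − A_{p,θ}·(x − θ)^p for every real x > θ. -/
/-- The set of values `(cos θ - cos x)/(x - θ)^p` for `x ∈ (θ, π)`. -/
noncomputable def Aset (p θ : ℝ) : Set ℝ :=
  (fun x : ℝ => (Real.cos θ - Real.cos x) / (x - θ) ^ p) '' Set.Ioo θ Real.pi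

/-- `A p θ` is the supremum of `(cos θ - cos x)/(x - θ)^p` over `x ∈ (θ, π)`. -/
noncomputable def A (p θ : ℝ) : ℝ := sSup (Aset p θ)

/-- The parameter domain: `p ∈ (0,1]` and `θ ∈ (−π, π/2]`, or `p ∈ (1,2]` and `θ ∈ (−π, 0]`. -/
def Dom (p θ : ℝ) : Prop :=
  (p ∈ Set.Ioc (0 : ℝ) 1 ∧ θ ∈ Set.Ioc (-Real.pi) (Real.pi / 2)) ∨
  (p ∈ Set.Ioc (1 : ℝ) 2 ∧ θ ∈ Set.Ioc (-Real.pi) 0)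

open Real Set in
theorem stmt0 (p θ : ℝ) (h : Dom p θ) :
    BddAbove (Aset p θ) ∧ 0 < A p θ ∧
      ∀ x : ℝ, θ < x → Real.cos θ - A p θ * (x - θ) ^ p ≤ Real.cos x := by
  have hpi := Real.pi_pos
  have hp0 : 0 < p := by
    rcases h with ⟨hp, _⟩ | ⟨hp, _⟩
    · exact hp.1
    · linarith [hp.1]
  have hθlo : -π < θ := by
    rcases h with ⟨_, hθ⟩ | ⟨_, hθ⟩ <;> exact hθ.1
  have hθhi : θ < π := by
    rcases h with ⟨_, hθ⟩ | ⟨_, hθ⟩ <;> [linarith [hθ.2]; linarith [hθ.2]]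
  have hπθ : (0:ℝ) < π - θ := by linarith
  -- pointwise upper bound on the ratio
  obtain ⟨M, hM0, hMb⟩ : ∃ M : ℝ, 0 < M ∧
      ∀ x ∈ Set.Ioo θ π, (Real.cos θ - Real.cos x) / (x - θ) ^ p ≤ M := by
    rcases h with ⟨hp, hθ⟩ | ⟨hp, hθ⟩
    · -- p ≤ 1 : use |cos θ - cos x| ≤ x - θ
      refine ⟨(π - θ) ^ (1 - p), Real.rpow_pos_of_pos hπθ _, fun x hx => ?_⟩
      have hxθ : 0 < x - θ := by linarith [hx.1]
      have hrp : (0:ℝ) < (x - θ) ^ p := Real.rpow_pos_of_pos hxθ p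
      rw [div_le_iff₀ hrp]
      have hlin : Real.cos θ - Real.cos x ≤ x - θ := by
        have h1 := Real.cos_sub_cos θ x
        have h2 : |Real.sin ((θ - x) / 2)| ≤ |(θ - x) / 2| := Real.abs_sin_le_abs
        have h3 : |Real.sin ((θ + x) / 2)| ≤ 1 := Real.abs_sin_le_one _
        have h4 : |(θ - x) / 2| = (x - θ) / 2 := by
          rw [abs_div, abs_of_neg (by linarith : θ - x < 0)]
          norm_num
        calc Real.cos θ - Real.cos x ≤ |Real.cos θ - Real.cos x| := le_abs_self _
          _ = 2 * (|Real.sin ((θ + x) / 2)| * |Real.sin ((θ - x) / 2)|) := by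
              rw [h1]; rw [abs_mul, abs_mul, abs_neg]; norm_num; ring
          _ ≤ 2 * (1 * ((x - θ) / 2)) := by
              apply mul_le_mul_of_nonneg_left _ (by norm_num)
              exact mul_le_mul h3 (h4 ▸ h2) (abs_nonneg _) zero_le_one
          _ = x - θ := by ring
      calc Real.cos θ - Real.cos x ≤ x - θ := hlin
        _ = (x - θ) ^ (1 - p) * (x - θ) ^ p := by
            rw [← Real.rpow_add hxθ]; norm_num
        _ ≤ (π - θ) ^ (1 - p) * (x - θ) ^ p := by
            apply mul_le_mul_of_nonneg_right _ hrp.le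
            exact Real.rpow_le_rpow hxθ.le (by linarith [hx.2]) (by linarith [hp.2])
    · -- p ≤ 2, θ ≤ 0 : use cos θ - cos x ≤ (x - θ)²/2
      refine ⟨(π - θ) ^ (2 - p) / 2, by positivity, fun x hx => ?_⟩
      have hxθ : 0 < x - θ := by linarith [hx.1]
      have hrp : (0:ℝ) < (x - θ) ^ p := Real.rpow_pos_of_pos hxθ p
      rw [div_le_iff₀ hrp]
      have hquad : Real.cos θ - Real.cos x ≤ (x - θ) ^ 2 / 2 := by
        rcases le_or_gt x 0 with hx0 | hx0
        · -- both θ < x ≤ 0 : cos θ ≤ cos x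
          have : Real.cos (-x) ≥ Real.cos (-θ) := by
            apply Real.cos_le_cos_of_nonneg_of_le_pi (by linarith) (by linarith) (by linarith [hx.1])
          rw [Real.cos_neg, Real.cos_neg] at this
          nlinarith [sq_nonneg (x - θ)]
        · -- x > 0 : cos x ≥ 1 - x²/2 and x ≤ x - θ
          have h1 : 1 - x ^ 2 / 2 ≤ Real.cos x := Real.one_sub_sq_div_two_le_cos
          have h2 : Real.cos θ ≤ 1 := Real.cos_le_one θ
          have h3 : x ^ 2 ≤ (x - θ) ^ 2 := by nlinarith [hθ.2]
          linarith
      calc Real.cos θ - Real.cos x ≤ (x - θ) ^ 2 / 2 := hquad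
        _ = (x - θ) ^ (2 - p) * (x - θ) ^ p / 2 := by
            rw [← Real.rpow_add hxθ]
            norm_num
        _ ≤ (π - θ) ^ (2 - p) / 2 * (x - θ) ^ p := by
            rw [div_mul_eq_mul_div, mul_comm ((x - θ) ^ (2 - p)) _, mul_div_assoc,
              mul_comm ((π - θ) ^ (2 - p)) _, mul_div_assoc]
            apply mul_le_mul_of_nonneg_left _ hrp.le
            apply div_le_div_of_nonneg_right _ (by norm_num)
            exact Real.rpow_le_rpow hxθ.le (by linarith [hx.2]) (by linarith [hp.2])
  have hbdd : BddAbove (Aset p θ) := by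
    refine ⟨M, fun y hy => ?_⟩
    obtain ⟨x, hx, rfl⟩ := hy
    exact hMb x hx
  -- a positive element of the set
  set x₀ : ℝ := (|θ| + π) / 2 with hx₀def
  have habsθ : |θ| < π := abs_lt.mpr ⟨hθlo, hθhi⟩
  have hx₀mem : x₀ ∈ Set.Ioo θ π := by
    constructor
    · have := le_abs_self θ; simp only [hx₀def]; linarith
    · simp only [hx₀def]; linarith
  have hcoslt : Real.cos x₀ < Real.cos θ := by
    have : Real.cos x₀ < Real.cos |θ| := by
      apply Real.cos_lt_cos_of_nonneg_of_le_pi (abs_nonneg θ) (by simp only [hx₀def]; linarith)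
      simp only [hx₀def]; linarith
    rwa [Real.cos_abs] at this
  have hvpos : 0 < (Real.cos θ - Real.cos x₀) / (x₀ - θ) ^ p := by
    apply div_pos (by linarith) (Real.rpow_pos_of_pos (by linarith [hx₀mem.1]) p)
  have hApos : 0 < A p θ :=
    lt_of_lt_of_le hvpos (le_csSup hbdd ⟨x₀, hx₀mem, rfl⟩)
  refine ⟨hbdd, hApos, fun x hx => ?_⟩
  -- the key: A ≥ (cos θ + 1)/(π - θ)^p, via limit as x → π⁻
  have hkey : (Real.cos θ + 1) / (π - θ) ^ p ≤ A p θ := by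
    set f : ℝ → ℝ := fun x => (Real.cos θ - Real.cos x) / (x - θ) ^ p with hfdef
    have hcont : ContinuousAt f π := by
      apply ContinuousAt.div
      · exact (continuous_const.sub Real.continuous_cos).continuousAt
      · exact ContinuousAt.rpow_const ((continuous_id.sub continuous_const).continuousAt)
          (Or.inr hp0.le)
      · exact (Real.rpow_pos_of_pos hπθ p).ne'
    have htend : Filter.Tendsto f (nhdsWithin π (Set.Iio π)) (nhds (f π)) :=
      hcont.continuousWithinAt.tendsto
    have hev : ∀ᶠ y in nhdsWithin π (Set.Iio π), f y ≤ A p θ := by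
      filter_upwards [Ioo_mem_nhdsLT_of_mem (show π ∈ Set.Ioc θ π from ⟨hθhi, le_refl _⟩)]
        with y hy
      exact le_csSup hbdd ⟨y, hy, rfl⟩
    have := le_of_tendsto htend hev
    simpa [hfdef, Real.cos_pi, sub_neg_eq_add] using this
  rcases lt_or_ge x π with hxπ | hxπ
  · -- x ∈ (θ, π) : direct from sup
    have hle : (Real.cos θ - Real.cos x) / (x - θ) ^ p ≤ A p θ :=
      le_csSup hbdd ⟨x, ⟨hx, hxπ⟩, rfl⟩
    have hrp : (0:ℝ) < (x - θ) ^ p := Real.rpow_pos_of_pos (by linarith) p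
    rw [div_le_iff₀ hrp] at hle
    linarith
  · -- x ≥ π
    have h1 : Real.cos θ + 1 ≤ A p θ * (π - θ) ^ p := by
      have hrp : (0:ℝ) < (π - θ) ^ p := Real.rpow_pos_of_pos hπθ p
      calc Real.cos θ + 1 = (Real.cos θ + 1) / (π - θ) ^ p * (π - θ) ^ p := by
            field_simp
        _ ≤ A p θ * (π - θ) ^ p := mul_le_mul_of_nonneg_right hkey hrp.le
    have h2 : A p θ * (π - θ) ^ p ≤ A p θ * (x - θ) ^ p := by
      apply mul_le_mul_of_nonneg_left _ hApos.le
      exact Real.rpow_le_rpow hπθ.le (by linarith) hp0.le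
    have h3 : -1 ≤ Real.cos x := Real.neg_one_le_cos x
    linarith
end

section
/- Let p ∈ (0,1] and θ ∈ (−π, π/2], or p ∈ (1,2] and θ ∈ (−π, 0], with (p,θ) ≠ (2,0). Then the supremum A_{p,θ} of (cos θ − cos x)/(x − θ)^p over x ∈ (θ, π) is attained at exactly one point of (θ, π), namely at x = φ_p(θ), and A_{p,θ} = sin φ_p(θ) / (p·(φ_p(θ) − θ)^{p−1}). -/
/-!
Let `f = cosRatio p θ`. On `(θ, |θ|]` we have `f ≤ 0`, while on `(|θ|, π)` `f` is positive with
logarithmic derivative `L = cosRatioLogDeriv p θ`.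
The equation defining `φ` says exactly `L φ = 0`, so everything follows once `L` is strictly
decreasing on `(|θ|, π)`. With `a = (x - θ) / 2`, `b = (x + θ) / 2` we get
`L' < 0 ↔ p sin² a sin² b < (sin² a + sin² b) a²`, which holds because `sin a < a`, and,
when `1 < p ≤ 2`, also `sin b ≤ b ≤ a` (this is where `θ ≤ 0` enters).
-/

open Real Set

noncomputable def cosRatio (p θ x : ℝ) : ℝ := (cos θ - cos x) / (x - θ) ^ p

noncomputable def cosRatioLogDeriv (p θ x : ℝ) : ℝ := sin x / (cos θ - cos x) - p / (x - θ)

variable {p θ x φ : ℝ}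

lemma cos_lt_cos_of_abs_lt (hx : |θ| < x) (hxπ : x ≤ π) : cos x < cos θ := by
  simpa only [cos_abs] using cos_lt_cos_of_nonneg_of_le_pi (abs_nonneg θ) hxπ hx

lemma mul_sq_mul_lt_sq_add_sq_mul_sq {s t a : ℝ} (hs : 0 < s) (ht : 0 < t) (hsa : s < a)
    (hp : p ≤ 1 ∨ (p ≤ 2 ∧ t ≤ a)) : p * (s * t) ^ 2 < (s ^ 2 + t ^ 2) * a ^ 2 := by
  have hst : (s * t) ^ 2 < (a * t) ^ 2 := by gcongr
  rcases hp with hp | ⟨hp, hta⟩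
  · nlinarith [sq_nonneg (s * t), sq_nonneg (s * a)]
  · have : (s * t) ^ 2 ≤ (s * a) ^ 2 := by gcongr
    nlinarith [sq_nonneg (s * t)]

lemma mul_sq_cos_sub_cos_lt (hp : p ≤ 1 ∨ (p ≤ 2 ∧ θ ≤ 0)) (hx : x ∈ Ioo |θ| π) :
    p * (cos θ - cos x) ^ 2 < (1 - cos θ * cos x) * (x - θ) ^ 2 := by
  obtain ⟨hθx, hxπ⟩ := hx
  obtain ⟨hxθ, hθx⟩ := abs_lt.mp hθx
  set a := (x - θ) / 2 with ha_def
  set b := (x + θ) / 2 with hb_def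
  have ha : 0 < a := by linarith
  have hb : 0 < b := by linarith
  have hsa : 0 < sin a := sin_pos_of_pos_of_lt_pi ha (by linarith)
  have hsb : 0 < sin b := sin_pos_of_pos_of_lt_pi hb (by linarith)
  have hθ_eq : θ = b - a := by ring
  have hx_eq : x = b + a := by ring
  have hdiff : cos θ - cos x = 2 * (sin a * sin b) := by
    rw [hθ_eq, hx_eq, cos_sub, cos_add]; ring
  have hprod : 1 - cos θ * cos x = sin a ^ 2 + sin b ^ 2 := by
    rw [hθ_eq, hx_eq, cos_sub, cos_add]
    nlinarith [sin_sq_add_cos_sq a, sin_sq_add_cos_sq b]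
  rw [hdiff, hprod, show x - θ = 2 * a by ring]
  have := mul_sq_mul_lt_sq_add_sq_mul_sq (p := p) hsa hsb (sin_lt ha) <| hp.imp_right
    fun ⟨hp2, hθ0⟩ => ⟨hp2, (sin_le hb.le).trans (by linarith)⟩
  linarith

lemma hasDerivAt_cosRatioLogDeriv (hx : x ∈ Ioo |θ| π) :
    HasDerivAt (cosRatioLogDeriv p θ)
      ((cos θ * cos x - 1) / (cos θ - cos x) ^ 2 + p / (x - θ) ^ 2) x := by
  have hc : cos θ - cos x ≠ 0 := (sub_pos.mpr (cos_lt_cos_of_abs_lt hx.1 hx.2.le)).ne'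
  have hxθ : x - θ ≠ 0 := (sub_pos.mpr ((le_abs_self θ).trans_lt hx.1)).ne'
  have := ((hasDerivAt_sin x).div ((hasDerivAt_cos x).const_sub (cos θ)) hc).sub
    ((hasDerivAt_const x p).div ((hasDerivAt_id' x).sub_const θ) hxθ)
  refine this.congr_deriv ?_
  field_simp
  linear_combination -(x - θ) ^ 2 * sin_sq_add_cos_sq x

lemma strictAntiOn_cosRatioLogDeriv (hp : p ≤ 1 ∨ (p ≤ 2 ∧ θ ≤ 0)) :
    StrictAntiOn (cosRatioLogDeriv p θ) (Ioo |θ| π) := by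
  refine strictAntiOn_of_hasDerivWithinAt_neg (convex_Ioo _ _)
    (fun x hx => (hasDerivAt_cosRatioLogDeriv hx).continuousAt.continuousWithinAt)
    (fun x hx => (hasDerivAt_cosRatioLogDeriv (interior_subset hx)).hasDerivWithinAt) ?_
  intro x hx
  rw [interior_Ioo] at hx
  have hc : 0 < cos θ - cos x := sub_pos.mpr (cos_lt_cos_of_abs_lt hx.1 hx.2.le)
  have hxθ : 0 < x - θ := sub_pos.mpr ((le_abs_self θ).trans_lt hx.1)
  have key := mul_sq_cos_sub_cos_lt hp hx
  rw [div_add_div _ _ (by positivity) (by positivity)]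
  exact div_neg_of_neg_of_pos (by linarith) (by positivity)

lemma cosRatio_pos (hx : x ∈ Ioo |θ| π) : 0 < cosRatio p θ x :=
  div_pos (sub_pos.mpr (cos_lt_cos_of_abs_lt hx.1 hx.2.le))
    (rpow_pos_of_pos (sub_pos.mpr ((le_abs_self θ).trans_lt hx.1)) p)

lemma cosRatio_nonpos (hθ : |θ| ≤ π) (hx : x ∈ Ioc θ |θ|) : cosRatio p θ x ≤ 0 := by
  have hcos : cos θ ≤ cos x := by
    rw [← cos_abs θ, ← cos_abs x]
    exact cos_le_cos_of_nonneg_of_le_pi (abs_nonneg x) hθ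
      (abs_le.mpr ⟨by linarith [neg_abs_le θ, hx.1], hx.2⟩)
  exact div_nonpos_of_nonpos_of_nonneg (by linarith) (rpow_nonneg (by linarith [hx.1]) p)

lemma hasDerivAt_cosRatio (hx : x ∈ Ioo |θ| π) :
    HasDerivAt (cosRatio p θ) (cosRatio p θ x * cosRatioLogDeriv p θ x) x := by
  have hc : cos θ - cos x ≠ 0 := (sub_pos.mpr (cos_lt_cos_of_abs_lt hx.1 hx.2.le)).ne'
  have hxθ : 0 < x - θ := sub_pos.mpr ((le_abs_self θ).trans_lt hx.1)
  have := ((hasDerivAt_cos x).const_sub (cos θ)).div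
    (((hasDerivAt_id' x).sub_const θ).rpow_const (p := p) (Or.inl hxθ.ne'))
    (rpow_pos_of_pos hxθ p).ne'
  refine this.congr_deriv ?_
  rw [cosRatio, cosRatioLogDeriv, rpow_sub_one hxθ.ne']
  field_simp

lemma cosRatioLogDeriv_eq_zero (hφ : φ ∈ Ioo |θ| π)
    (heq : p * (cos φ - cos θ) + (φ - θ) * sin φ = 0) : cosRatioLogDeriv p θ φ = 0 := by
  have hc : cos θ - cos φ ≠ 0 := (sub_pos.mpr (cos_lt_cos_of_abs_lt hφ.1 hφ.2.le)).ne'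
  have hφθ : φ - θ ≠ 0 := (sub_pos.mpr ((le_abs_self θ).trans_lt hφ.1)).ne'
  rw [cosRatioLogDeriv, div_sub_div _ _ hc hφθ]
  exact div_eq_zero_iff.mpr (Or.inl (by linear_combination heq))

lemma strictMonoOn_cosRatio (hp : p ≤ 1 ∨ (p ≤ 2 ∧ θ ≤ 0)) (hφ : φ ∈ Ioo |θ| π)
    (hLφ : cosRatioLogDeriv p θ φ = 0) : StrictMonoOn (cosRatio p θ) (Ioc |θ| φ) := by
  have hsub : Ioc |θ| φ ⊆ Ioo |θ| π := Ioc_subset_Ioo_right hφ.2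
  refine strictMonoOn_of_hasDerivWithinAt_pos (convex_Ioc _ _)
    (fun x hx => (hasDerivAt_cosRatio (hsub hx)).continuousAt.continuousWithinAt)
    (fun x hx => (hasDerivAt_cosRatio (hsub (interior_subset hx))).hasDerivWithinAt) ?_
  intro x hx
  rw [interior_Ioc] at hx
  have hx' : x ∈ Ioo |θ| π := hsub (Ioo_subset_Ioc_self hx)
  refine mul_pos (cosRatio_pos hx') ?_
  exact hLφ ▸ strictAntiOn_cosRatioLogDeriv hp hx' hφ hx.2

lemma strictAntiOn_cosRatio (hp : p ≤ 1 ∨ (p ≤ 2 ∧ θ ≤ 0)) (hφ : φ ∈ Ioo |θ| π)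
    (hLφ : cosRatioLogDeriv p θ φ = 0) : StrictAntiOn (cosRatio p θ) (Ico φ π) := by
  have hsub : Ico φ π ⊆ Ioo |θ| π := Ico_subset_Ioo_left hφ.1
  refine strictAntiOn_of_hasDerivWithinAt_neg (convex_Ico _ _)
    (fun x hx => (hasDerivAt_cosRatio (hsub hx)).continuousAt.continuousWithinAt)
    (fun x hx => (hasDerivAt_cosRatio (hsub (interior_subset hx))).hasDerivWithinAt) ?_
  intro x hx
  rw [interior_Ico] at hx
  have hx' : x ∈ Ioo |θ| π := hsub (Ioo_subset_Ico_self hx)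
  refine mul_neg_of_pos_of_neg (cosRatio_pos hx') ?_
  exact hLφ ▸ strictAntiOn_cosRatioLogDeriv hp hφ hx' hx.1

lemma cosRatio_lt_cosRatio_of_ne (hp : p ≤ 1 ∨ (p ≤ 2 ∧ θ ≤ 0)) (hφ : φ ∈ Ioo |θ| π)
    (hLφ : cosRatioLogDeriv p θ φ = 0) (hx : x ∈ Ioo θ π) (hxφ : x ≠ φ) :
    cosRatio p θ x < cosRatio p θ φ := by
  rcases le_or_gt x |θ| with hxθ | hθx
  · exact (cosRatio_nonpos (hφ.1.trans hφ.2).le ⟨hx.1, hxθ⟩).trans_lt (cosRatio_pos hφ)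
  rcases hxφ.lt_or_gt with hlt | hgt
  · exact strictMonoOn_cosRatio hp hφ hLφ ⟨hθx, hlt.le⟩ ⟨hφ.1, le_rfl⟩ hlt
  · exact strictAntiOn_cosRatio hp hφ hLφ ⟨le_rfl, hφ.2⟩ ⟨hgt.le, hx.2⟩ hgt

lemma cosRatio_eq_sin_div (hp : p ≠ 0) (hθφ : θ < φ)
    (heq : p * (cos φ - cos θ) + (φ - θ) * sin φ = 0) :
    cosRatio p θ φ = sin φ / (p * (φ - θ) ^ (p - 1)) := by
  have hφθ : 0 < φ - θ := sub_pos.mpr hθφ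
  rw [cosRatio, rpow_sub_one hφθ.ne']
  field_simp
  linear_combination -heq

theorem stmt2_general (p θ φ : ℝ) (h : Dom p θ)
    (hφ : φ ∈ Set.Ioo |θ| Real.pi ∧
      p * (Real.cos φ - Real.cos θ) + (φ - θ) * Real.sin φ = 0) :
    (∀ x ∈ Set.Ioo θ Real.pi,
        ((Real.cos θ - Real.cos x) / (x - θ) ^ p = A p θ ↔ x = φ)) ∧
    A p θ = Real.sin φ / (p * (φ - θ) ^ (p - 1)) := by
  obtain ⟨hφ, heq⟩ := hφ
  have hp : 0 < p ∧ (p ≤ 1 ∨ (p ≤ 2 ∧ θ ≤ 0)) := by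
    rcases h with ⟨⟨hp0, hp1⟩, -⟩ | ⟨⟨hp1, hp2⟩, -, hθ⟩
    exacts [⟨hp0, .inl hp1⟩, ⟨by linarith, .inr ⟨hp2, hθ⟩⟩]
  have hθφ : θ < φ := (le_abs_self θ).trans_lt hφ.1
  have hlt : ∀ x ∈ Ioo θ π, x ≠ φ → cosRatio p θ x < cosRatio p θ φ := fun _ hx hxφ =>
    cosRatio_lt_cosRatio_of_ne hp.2 hφ (cosRatioLogDeriv_eq_zero hφ heq) hx hxφ
  have hA : A p θ = cosRatio p θ φ := by
    refine IsGreatest.csSup_eq ⟨⟨φ, ⟨hθφ, hφ.2⟩, rfl⟩, ?_⟩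
    rintro _ ⟨x, hx, rfl⟩
    rcases eq_or_ne x φ with rfl | hxφ
    exacts [le_rfl, (hlt x hx hxφ).le]
  refine ⟨fun x hx => ⟨fun hfx => ?_, fun hxφ => hxφ ▸ hA.symm⟩,
    hA.trans (cosRatio_eq_sin_div hp.1.ne' hθφ heq)⟩
  by_contra hxφ
  exact (hlt x hx hxφ).ne (hfx.trans hA)

theorem stmt2 (p θ φ : ℝ) (h : Dom p θ) (hne : (p, θ) ≠ ((2 : ℝ), (0 : ℝ)))
    (hφ : φ ∈ Set.Ioo |θ| Real.pi ∧
      p * (Real.cos φ - Real.cos θ) + (φ - θ) * Real.sin φ = 0) :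
    (∀ x ∈ Set.Ioo θ Real.pi,
        ((Real.cos θ - Real.cos x) / (x - θ) ^ p = A p θ ↔ x = φ)) ∧
    A p θ = Real.sin φ / (p * (φ - θ) ^ (p - 1)) :=
  stmt2_general p θ φ h hφ
end

section
/- Let p ∈ (0,1] and θ ∈ (−π, π/2]. Then φ_p(θ) ≥ π/2; in particular φ_p(θ) lies in the interval [max(|θ|, π/2), π). -/
/-!
If `φ < π/2`, then on `[|θ|, φ]` the function `f x = cos x - cos θ + (x - θ) sin x` has derivative
`(x - θ) cos x > 0` and `f |θ| = (|θ| - θ) sin |θ| ≥ 0`, so `f φ > 0`. The left-hand side of the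
defining equation is the convex combination `p f φ + (1 - p) (φ - θ) sin φ` of two positive numbers,
hence not zero.
-/

open Real Set

lemma hasDerivAt_cos_sub_cos_add_mul_sin (θ x : ℝ) :
    HasDerivAt (fun x => cos x - cos θ + (x - θ) * sin x) ((x - θ) * cos x) x := by
  refine (((hasDerivAt_cos x).sub_const (cos θ)).add
    (((hasDerivAt_id' x).sub_const θ).mul (hasDerivAt_sin x))).congr_deriv ?_
  ring

lemma strictMonoOn_cos_sub_cos_add_mul_sin (θ : ℝ) :
    StrictMonoOn (fun x => cos x - cos θ + (x - θ) * sin x) (Icc |θ| (π / 2)) := by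
  refine strictMonoOn_of_deriv_pos (convex_Icc _ _) (by fun_prop) fun x hx => ?_
  rw [interior_Icc] at hx
  rw [(hasDerivAt_cos_sub_cos_add_mul_sin θ x).deriv]
  have hxθ : 0 < x - θ := by linarith [le_abs_self θ, hx.1]
  have hcos : 0 < cos x := cos_pos_of_mem_Ioo ⟨by linarith [abs_nonneg θ, pi_pos, hx.1], hx.2⟩
  positivity

lemma cos_sub_cos_add_mul_sin_pos {θ x : ℝ} (hθx : |θ| < x) (hx : x ≤ π / 2) :
    0 < cos x - cos θ + (x - θ) * sin x := by
  have hθ_pi : |θ| ≤ π := by linarith [pi_pos]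
  have h_at_abs : 0 ≤ cos |θ| - cos θ + (|θ| - θ) * sin |θ| := by
    rw [cos_abs, sub_self, zero_add]
    exact mul_nonneg (by linarith [le_abs_self θ])
      (sin_nonneg_of_nonneg_of_le_pi (abs_nonneg θ) hθ_pi)
  exact h_at_abs.trans_lt <| strictMonoOn_cos_sub_cos_add_mul_sin θ
    ⟨le_rfl, by linarith⟩ ⟨hθx.le, hx⟩ hθx

lemma mul_cos_sub_cos_add_mul_sin_pos {p θ x : ℝ} (hp0 : 0 ≤ p) (hp1 : p ≤ 1)
    (hθx : |θ| < x) (hx : x ≤ π / 2) :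
    0 < p * (cos x - cos θ) + (x - θ) * sin x := by
  have hf := cos_sub_cos_add_mul_sin_pos hθx hx
  have hx0 : 0 < x := (abs_nonneg θ).trans_lt hθx
  have hsin : 0 < (x - θ) * sin x :=
    mul_pos (by linarith [le_abs_self θ]) (sin_pos_of_pos_of_lt_pi hx0 (by linarith [pi_pos]))
  calc 0 < p * (cos x - cos θ + (x - θ) * sin x) + (1 - p) * ((x - θ) * sin x) := by
        rcases hp0.eq_or_lt with rfl | hp
        · linarith
        · nlinarith
    _ = p * (cos x - cos θ) + (x - θ) * sin x := by ring

theorem stmt4_general (p θ φ : ℝ) (hp : p ∈ Set.Ioc (0 : ℝ) 1)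
    (hφ : φ ∈ Set.Ioo |θ| Real.pi ∧
      p * (Real.cos φ - Real.cos θ) + (φ - θ) * Real.sin φ = 0) :
    Real.pi / 2 ≤ φ ∧ φ ∈ Set.Ico (max |θ| (Real.pi / 2)) Real.pi := by
  obtain ⟨⟨hθφ, hφπ⟩, hroot⟩ := hφ
  have hφ : π / 2 ≤ φ := by
    by_contra! hlt
    exact (mul_cos_sub_cos_add_mul_sin_pos hp.1.le hp.2 hθφ hlt.le).ne' hroot
  exact ⟨hφ, max_le hθφ.le hφ, hφπ⟩

theorem stmt4 (p θ φ : ℝ) (hp : p ∈ Set.Ioc (0 : ℝ) 1)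
    (hθ : θ ∈ Set.Ioc (-Real.pi) (Real.pi / 2))
    (hφ : φ ∈ Set.Ioo |θ| Real.pi ∧
      p * (Real.cos φ - Real.cos θ) + (φ - θ) * Real.sin φ = 0) :
    Real.pi / 2 ≤ φ ∧ φ ∈ Set.Ico (max |θ| (Real.pi / 2)) Real.pi :=
  stmt4_general p θ φ hp hφ
end

section
/- Let p ∈ (0,1] and θ ∈ (−π, π/2], or p ∈ (1,2] and θ ∈ (−π, 0], with (p,θ) ≠ (2,0). Then φ_p(θ) is a simple zero of f_{p,θ}(x) = p·(cos x − cos θ) + (x − θ)·sin x; that is, (1 − p)·sin φ_p(θ) + (φ_p(θ) − θ)·cos φ_p(θ) ≠ 0. -/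
set_option maxHeartbeats 1000000


theorem stmt5 (p θ φ : ℝ) (h : Dom p θ) (hne : (p, θ) ≠ ((2 : ℝ), (0 : ℝ)))
    (hφ : φ ∈ Set.Ioo |θ| Real.pi ∧
      p * (Real.cos φ - Real.cos θ) + (φ - θ) * Real.sin φ = 0) :
    (1 - p) * Real.sin φ + (φ - θ) * Real.cos φ ≠ 0 := by
  obtain ⟨⟨hφl, hφπ⟩, heq⟩ := hφ
  intro hder
  simp only [Dom, Set.mem_Ioc] at h
  have hπ := Real.pi_pos
  have hπ3 := Real.pi_gt_three
  have hp0 : 0 < p := by rcases h with ⟨⟨h1,_⟩,_⟩ | ⟨⟨h1,_⟩,_⟩ <;> linarith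
  have hθπ : -Real.pi < θ := by rcases h with ⟨_,h1,_⟩ | ⟨_,h1,_⟩ <;> linarith
  have hθhalf : θ ≤ Real.pi / 2 := by rcases h with ⟨_,_,h1⟩ | ⟨_,_,h1⟩ <;> linarith
  have hkey : 0 < θ → p ≤ 1 := by rcases h with ⟨⟨_,h1⟩,_⟩ | ⟨_,_,h1⟩ <;> intro h2 <;> linarith
  obtain ⟨u, v, rfl, rfl⟩ : ∃ u v : ℝ, φ = u + v ∧ θ = v - u :=
    ⟨(φ - θ)/2, (φ + θ)/2, by ring, by ring⟩
  have hu : 0 < u := by have := le_abs_self (v - u); linarith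
  have hv : 0 < v := by have := neg_abs_le (v - u); linarith
  have huπ : u < Real.pi := by linarith
  have hvπ : v < Real.pi := by linarith
  have hs1 : 0 < Real.sin u := Real.sin_pos_of_pos_of_lt_pi hu huπ
  have hs2 : 0 < Real.sin v := Real.sin_pos_of_pos_of_lt_pi hv hvπ
  have hsφ : 0 < Real.sin u * Real.cos v + Real.cos u * Real.sin v := by
    have := Real.sin_pos_of_pos_of_lt_pi (show 0 < u + v by linarith) hφπ
    rwa [Real.sin_add] at this
  simp only [Real.cos_add, Real.cos_sub, Real.sin_add] at heq hder
  have E1 : u * (Real.sin u * Real.cos v + Real.cos u * Real.sin v)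
      = p * (Real.sin u * Real.sin v) := by linear_combination (1/2) * heq
  have E3 : Real.sin u * Real.sin v * (Real.sin u * Real.cos v + Real.cos u * Real.sin v)
      = u * ((Real.sin u)^2 + (Real.sin v)^2) := by
    linear_combination (Real.sin u * Real.sin v) * hder
      - (Real.sin u * Real.cos v + Real.cos u * Real.sin v) * E1
      + (u * (Real.sin u)^2) * (Real.sin_sq_add_cos_sq v)
      + (u * (Real.sin v)^2) * (Real.sin_sq_add_cos_sq u)
  have K1 : Real.sin u * Real.cos u < u := by
    have h2 := Real.sin_lt (show (0:ℝ) < 2*u by linarith)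
    rw [Real.sin_two_mul] at h2; linarith
  have K2 : Real.sin v * Real.cos v < u := by
    rcases le_or_gt v u with hvu | hvu
    · have h2 := Real.sin_lt (show (0:ℝ) < 2*v by linarith)
      rw [Real.sin_two_mul] at h2; linarith
    · -- here θ = v - u > 0, so p ≤ 1
      have hp1 : p ≤ 1 := hkey (by linarith)
      have hab : 0 < Real.sin u * Real.sin v := mul_pos hs1 hs2
      have h1 : u * (Real.sin u * Real.cos v + Real.cos u * Real.sin v)
          ≤ Real.sin u * Real.sin v := by nlinarith [E1, hab, hp1]
      have h2 : (Real.sin u * Real.cos v + Real.cos u * Real.sin v)^2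
          ≤ (Real.sin u)^2 + (Real.sin v)^2 := by
        nlinarith [mul_le_mul_of_nonneg_right h1 hsφ.le, E3, hu]
      have hcc : Real.cos u * Real.cos v - Real.sin u * Real.sin v ≤ 0 := by
        by_contra hc
        push_neg at hc
        have hid : (Real.sin u)^2 + (Real.sin v)^2
            - (Real.sin u * Real.cos v + Real.cos u * Real.sin v)^2
            = 2 * (Real.sin u * Real.sin v)
              * (Real.sin u * Real.sin v - Real.cos u * Real.cos v) := by
          linear_combination (-(Real.sin u)^2) * (Real.sin_sq_add_cos_sq v)
            - ((Real.sin v)^2) * (Real.sin_sq_add_cos_sq u)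
        nlinarith [mul_pos hab hc, h2, hid]
      have hph : Real.pi/2 ≤ u + v := by
        by_contra hc
        push_neg at hc
        have hpos := Real.cos_pos_of_mem_Ioo
          (show u+v ∈ Set.Ioo (-(Real.pi/2)) (Real.pi/2) from ⟨by linarith, hc⟩)
        rw [Real.cos_add] at hpos
        linarith
      rcases le_or_gt (Real.pi/2) u with hu2 | hu2
      · have h3 := Real.sin_le_one (2*v)
        rw [Real.sin_two_mul] at h3
        linarith
      · have hcos : Real.cos v ≤ Real.sin u := by
          have h3 : Real.cos v ≤ Real.cos (Real.pi/2 - u) :=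
            Real.cos_le_cos_of_nonneg_of_le_pi (by linarith) (by linarith) (by linarith)
          rwa [Real.cos_pi_div_two_sub] at h3
        rcases le_or_gt (Real.cos v) 0 with h4 | h4
        · nlinarith [mul_nonneg hs2.le (neg_nonneg.mpr h4), hu]
        · have h5 : Real.sin v * Real.cos v ≤ Real.cos v :=
            mul_le_of_le_one_left h4.le (Real.sin_le_one v)
          linarith [Real.sin_lt hu]
  have t1 : 0 < (Real.sin u)^2 * (u - Real.sin v * Real.cos v) :=
    mul_pos (pow_pos hs1 2) (by linarith)
  have t2 : 0 < (Real.sin v)^2 * (u - Real.sin u * Real.cos u) :=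
    mul_pos (pow_pos hs2 2) (by linarith)
  nlinarith [t1, t2, E3]
end

section
/- Let p ∈ (0,1] and θ ∈ [−π/2, π/2]. Set φ⁺ = φ_p(θ) and φ⁻ = −φ_p(−θ). Then for every x ∈ ℝ: cos x ≥ cos θ − A_{p,θ}·(x − θ)^p when x ≥ θ, and cos x ≥ cos θ − A_{p,−θ}·(θ − x)^p when x < θ. Moreover, equality holds if and only if x = θ, x = φ⁺, or x = φ⁻. -/
open Real Set

theorem strictMonoOn_Icc_of_hasDerivAt_pos {f f' : ℝ → ℝ} {a b : ℝ}
    (hf : ContinuousOn f (Icc a b)) (hf' : ∀ x ∈ Ioo a b, HasDerivAt f (f' x) x)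
    (hpos : ∀ x ∈ Ioo a b, 0 < f' x) : StrictMonoOn f (Icc a b) :=
  strictMonoOn_of_hasDerivWithinAt_pos (convex_Icc a b) hf
    (by simpa using fun x hx => (hf' x hx).hasDerivWithinAt) (by simpa using hpos)

theorem pos_of_strictConvexOn_deriv {f g : ℝ → ℝ} {a b φ g' : ℝ}
    (hf : ContinuousOn f (Icc a b)) (hfg : ∀ x ∈ Ioo a b, HasDerivAt f (g x) x)
    (hg : StrictConvexOn ℝ (Ioo a b) g) (hφ : φ ∈ Ioo a b) (hg' : HasDerivAt g g' φ)
    (hg'_pos : 0 < g') (hfφ : f φ = 0) (hgφ : g φ = 0) (hfa : 0 ≤ f a) :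
    ∀ x ∈ Ioc a b, x ≠ φ → 0 < f x := by
  intro x hx hxφ
  rcases hxφ.lt_or_gt with hxφ | hφx
  · by_contra! hfx
    obtain ⟨ξ, hξ, hgξ⟩ := exists_hasDerivAt_eq_slope f g hxφ
      (hf.mono (Icc_subset_Icc hx.1.le hφ.2.le))
      (fun y hy => hfg y ⟨hx.1.trans hy.1, hy.2.trans hφ.2⟩)
    have hgξ_nonneg : 0 ≤ g ξ := by
      rw [hgξ, hfφ]; exact div_nonneg (by linarith) (by linarith [hξ.2])
    -- strict convexity of `g` with `g ξ ≥ 0 = g φ` forces `g > 0` to the left of `ξ`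
    have hg_pos : ∀ y ∈ Ioo a ξ, 0 < g y := by
      intro y hy
      have hslope := hg.slope_strict_mono_adjacent ⟨hy.1, hy.2.trans (hξ.2.trans hφ.2)⟩ hφ
        hy.2 hξ.2
      rw [hgφ] at hslope
      have : (0 - g ξ) / (φ - ξ) ≤ 0 :=
        div_nonpos_of_nonpos_of_nonneg (by linarith) (by linarith [hξ.2])
      have := (div_lt_iff₀ (sub_pos.2 hy.2)).1 (hslope.trans_le this)
      linarith
    have hmono := strictMonoOn_Icc_of_hasDerivAt_pos
      (hf.mono (Icc_subset_Icc le_rfl (hξ.2.trans hφ.2).le))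
      (fun y hy => hfg y ⟨hy.1, hy.2.trans (hξ.2.trans hφ.2)⟩) hg_pos
    linarith [hmono (left_mem_Icc.2 (hx.1.trans hξ.1).le) ⟨hx.1.le, hξ.1.le⟩ hx.1]
  · have hg_pos : ∀ y ∈ Ioo φ b, 0 < g y := by
      intro y hy
      have hslope := hg.lt_slope_of_hasDerivAt hφ ⟨hφ.1.trans hy.1, hy.2⟩ hy.1 hg'
      rw [slope_def_field, hgφ, sub_zero] at hslope
      exact (div_pos_iff_of_pos_right (sub_pos.2 hy.1)).1 (hg'_pos.trans hslope)
    have hmono := strictMonoOn_Icc_of_hasDerivAt_pos (hf.mono (Icc_subset_Icc hφ.1.le le_rfl))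
      (fun y hy => hfg y ⟨hφ.1.trans hy.1, hy.2⟩) hg_pos
    simpa [hfφ] using hmono (left_mem_Icc.2 hφ.2.le) ⟨hφx.le, hx.2⟩ hφx

theorem cos_sub_cos_pos {θ φ : ℝ} (hθφ : |θ| < φ) (hφ : φ ≤ π) : 0 < cos θ - cos φ := by
  rw [← cos_abs θ]
  linarith [cos_lt_cos_of_nonneg_of_le_pi (abs_nonneg θ) hφ hθφ]

theorem cos_sub_cos_lt_sub {θ φ : ℝ} (h : θ < φ) : cos θ - cos φ < φ - θ := by
  have hsin := abs_sin_lt_abs (x := (θ - φ) / 2) (by linarith)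
  rw [abs_of_neg (by linarith : (θ - φ) / 2 < 0)] at hsin
  have hsin_le := abs_sin_le_one ((θ + φ) / 2)
  calc cos θ - cos φ ≤ |cos θ - cos φ| := le_abs_self _
    _ = 2 * |sin ((θ + φ) / 2)| * |sin ((θ - φ) / 2)| := by
      rw [cos_sub_cos, abs_mul, abs_mul, abs_neg, abs_two]
    _ < φ - θ := by nlinarith [abs_nonneg (sin ((θ - φ) / 2))]

theorem cos_sub_cos_lt_mul_sin {θ φ : ℝ} (hθφ : |θ| < φ) (hφ : φ ≤ π / 2) :
    cos θ - cos φ < (φ - θ) * sin φ := by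
  have hθ := abs_lt.1 hθφ
  obtain ⟨ξ, hξ, hslope⟩ := exists_hasDerivAt_eq_slope cos (fun x => -sin x) hθ.2
    continuousOn_cos fun x _ => hasDerivAt_cos x
  have hsin : sin ξ < sin φ := strictMonoOn_sin ⟨by linarith [hξ.1], by linarith [hξ.2]⟩
    ⟨by linarith, hφ⟩ hξ.2
  rw [eq_div_iff (by linarith)] at hslope
  nlinarith

theorem sin_add_mul_cos_lt_sin_sq {θ φ : ℝ} (hθ : θ ≤ π / 2) (hθφ : |θ| < φ)
    (hφ : π / 2 < φ) (hφπ : φ < π) :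
    (cos θ - cos φ) * (sin φ + (φ - θ) * cos φ) < (φ - θ) * sin φ ^ 2 := by
  have hD := cos_sub_cos_pos hθφ hφπ.le
  have hcos : cos φ < 0 := cos_neg_of_pi_div_two_lt_of_lt hφ (by linarith)
  have hsin : 0 < sin φ := sin_pos_of_pos_of_lt_pi (by linarith) hφπ
  have hchord : 1 - sin φ < (φ - π / 2) * -cos φ := by
    simpa [cos_sub_pi_div_two, sin_sub_pi_div_two] using
      cos_sub_cos_lt_mul_sin (θ := 0) (φ := φ - π / 2) (by simpa using hφ) (by linarith)
  have hE : sin φ + (φ - θ) * cos φ < sin φ ^ 2 := by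
    nlinarith [sq_nonneg (sin φ - 1)]
  rcases le_or_gt (sin φ + (φ - θ) * cos φ) 0 with hE0 | hE0
  · have ht : 0 < φ - θ := by linarith [le_abs_self θ]
    nlinarith [mul_nonpos_of_nonneg_of_nonpos hD.le hE0, mul_pos ht (pow_pos hsin 2)]
  · nlinarith [cos_sub_cos_lt_sub (lt_of_le_of_lt (le_abs_self θ) hθφ)]

theorem one_sub_mul_sin_add_mul_cos_neg {p θ φ : ℝ} (hp : p ∈ Ioc 0 1) (hθ : |θ| ≤ π / 2)
    (hφ : φ ∈ Ioo |θ| π) (heq : p * (cos φ - cos θ) + (φ - θ) * sin φ = 0) :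
    (1 - p) * sin φ + (φ - θ) * cos φ < 0 := by
  have hD := cos_sub_cos_pos hφ.1 hφ.2.le
  have hφ_gt : π / 2 < φ := by
    by_contra! hφ_le
    nlinarith [cos_sub_cos_lt_mul_sin hφ.1 hφ_le, hp.2]
  have key := sin_add_mul_cos_lt_sin_sq (abs_le.1 hθ).2 hφ.1 hφ_gt hφ.2
  refine neg_of_mul_neg_right (a := cos θ - cos φ) ?_ hD.le
  linear_combination key + sin φ * heq

noncomputable def gap (B p θ x : ℝ) : ℝ := B * (x - θ) ^ p + (cos x - cos θ)

noncomputable def gapDeriv (B p θ x : ℝ) : ℝ := B * p * (x - θ) ^ (p - 1) - sin x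

noncomputable def gapDeriv2 (B p θ x : ℝ) : ℝ := B * p * (p - 1) * (x - θ) ^ (p - 2) - cos x

section gap

variable {B p θ x : ℝ}

theorem continuous_gap (hp : 0 ≤ p) : Continuous (gap B p θ) :=
  (continuous_const.mul ((continuous_id.sub continuous_const).rpow_const fun _ => Or.inr hp)).add
    (continuous_cos.sub continuous_const)

theorem hasDerivAt_gap (hx : θ < x) : HasDerivAt (gap B p θ) (gapDeriv B p θ x) x := by
  have h := (((hasDerivAt_id x).sub_const θ).rpow_const (p := p) (Or.inl (sub_pos.2 hx).ne'))
  refine ((h.const_mul B).add ((hasDerivAt_cos x).sub_const (cos θ))).congr_deriv ?_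
  simp only [gapDeriv, id]; ring

theorem hasDerivAt_gapDeriv (hx : θ < x) :
    HasDerivAt (gapDeriv B p θ) (gapDeriv2 B p θ x) x := by
  have h := (((hasDerivAt_id x).sub_const θ).rpow_const (p := p - 1) (Or.inl (sub_pos.2 hx).ne'))
  refine ((h.const_mul (B * p)).sub (hasDerivAt_sin x)).congr_deriv ?_
  simp only [gapDeriv2, id, show p - 1 - 1 = p - 2 by ring]; ring

theorem hasDerivAt_gapDeriv2 (hx : θ < x) :
    HasDerivAt (gapDeriv2 B p θ)
      (B * p * (p - 1) * (p - 2) * (x - θ) ^ (p - 3) + sin x) x := by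
  have h := (((hasDerivAt_id x).sub_const θ).rpow_const (p := p - 2) (Or.inl (sub_pos.2 hx).ne'))
  refine ((h.const_mul (B * p * (p - 1))).sub (hasDerivAt_cos x)).congr_deriv ?_
  simp only [id, show p - 2 - 1 = p - 3 by ring]; ring

theorem strictConvexOn_gapDeriv (hB : 0 ≤ B) (hp : p ∈ Icc 0 1) {a : ℝ} (hθa : θ ≤ a)
    (ha : 0 ≤ a) : StrictConvexOn ℝ (Ioo a π) (gapDeriv B p θ) := by
  have hθ : ∀ y ∈ Ioo a π, θ < y := fun y hy => hθa.trans_lt hy.1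
  have hmono : StrictMonoOn (gapDeriv2 B p θ) (Ioo a π) := by
    refine strictMonoOn_of_hasDerivWithinAt_pos (convex_Ioo a π)
      (fun y hy => (hasDerivAt_gapDeriv2 (hθ y hy)).continuousAt.continuousWithinAt)
      (fun y hy => (hasDerivAt_gapDeriv2 (hθ y (interior_subset hy))).hasDerivWithinAt)
      fun y hy => ?_
    rw [interior_Ioo] at hy
    have hcoeff : 0 ≤ B * p * (p - 1) * (p - 2) := by
      rw [show B * p * (p - 1) * (p - 2) = B * (p * ((1 - p) * (2 - p))) by ring]
      exact mul_nonneg hB (mul_nonneg hp.1 (mul_nonneg (by linarith [hp.2]) (by linarith [hp.2])))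
    have := mul_nonneg hcoeff (rpow_nonneg (sub_nonneg.2 (hθ y hy).le) (p - 3))
    linarith [sin_pos_of_pos_of_lt_pi (ha.trans_lt hy.1) hy.2]
  refine StrictMonoOn.strictConvexOn_of_deriv (convex_Ioo a π)
    (fun y hy => (hasDerivAt_gapDeriv (hθ y hy)).continuousAt.continuousWithinAt) ?_
  rw [interior_Ioo]
  exact hmono.congr fun y hy => (hasDerivAt_gapDeriv (hθ y hy)).deriv.symm

end gap

theorem gap_pos {B p θ φ x : ℝ} (hB : 0 < B) (hp : p ∈ Icc 0 1) (hφ : φ ∈ Ioo |θ| π)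
    (hfφ : gap B p θ φ = 0) (hgφ : gapDeriv B p θ φ = 0) (h2 : 0 < gapDeriv2 B p θ φ)
    (hx : θ < x) (hxφ : x ≠ φ) : 0 < gap B p θ x := by
  have hθ := le_abs_self θ
  have hpos : ∀ y ∈ Ioc |θ| π, y ≠ φ → 0 < gap B p θ y := by
    refine pos_of_strictConvexOn_deriv (continuous_gap hp.1).continuousOn
      (fun y hy => hasDerivAt_gap (hθ.trans_lt hy.1))
      (strictConvexOn_gapDeriv hB.le hp hθ (abs_nonneg θ)) hφ
      (hasDerivAt_gapDeriv (hθ.trans_lt hφ.1)) h2 hfφ hgφ ?_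
    rw [gap, cos_abs, sub_self, add_zero]
    exact mul_nonneg hB.le (rpow_nonneg (sub_nonneg.2 hθ) p)
  rcases le_or_gt x |θ| with hxθ | hxθ
  · have hcos : cos θ ≤ cos x := by
      rw [← cos_abs θ, ← cos_abs x]
      exact cos_le_cos_of_nonneg_of_le_pi (abs_nonneg x) (by linarith [hφ.1, hφ.2])
        (abs_le.2 ⟨by linarith [neg_abs_le θ], hxθ⟩)
    have := mul_pos hB (rpow_pos_of_pos (sub_pos.2 hx) p)
    rw [gap]; linarith
  rcases le_or_gt x π with hxπ | hxπ
  · exact hpos x ⟨hxθ, hxπ⟩ hxφ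
  · have hπ := hpos π ⟨by linarith [hφ.1, hφ.2], le_rfl⟩ hφ.2.ne'
    have hmono : B * (π - θ) ^ p ≤ B * (x - θ) ^ p := by
      gcongr <;> linarith [hφ.1, hφ.2, hp.1]
    rw [gap, cos_pi] at hπ
    rw [gap]; linarith [neg_one_le_cos x]

theorem gap_eq_zero {p θ φ : ℝ} (hθφ : θ < φ) :
    gap ((cos θ - cos φ) / (φ - θ) ^ p) p θ φ = 0 := by
  rw [gap, div_mul_cancel₀ _ (rpow_pos_of_pos (sub_pos.2 hθφ) p).ne']; ring

theorem gapDeriv_eq_zero {p θ φ : ℝ} (hθφ : θ < φ)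
    (heq : p * (cos φ - cos θ) + (φ - θ) * sin φ = 0) :
    gapDeriv ((cos θ - cos φ) / (φ - θ) ^ p) p θ φ = 0 := by
  have ht := sub_pos.2 hθφ
  rw [gapDeriv, rpow_sub_one ht.ne']
  field_simp [(rpow_pos_of_pos ht p).ne']
  linear_combination -heq

theorem gapDeriv2_pos {p θ φ : ℝ} (hp : p ∈ Ioc 0 1) (hθ : |θ| ≤ π / 2) (hφ : φ ∈ Ioo |θ| π)
    (heq : p * (cos φ - cos θ) + (φ - θ) * sin φ = 0) :
    0 < gapDeriv2 ((cos θ - cos φ) / (φ - θ) ^ p) p θ φ := by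
  have ht : 0 < φ - θ := by linarith [le_abs_self θ, hφ.1]
  have hval : gapDeriv2 ((cos θ - cos φ) / (φ - θ) ^ p) p θ φ =
      ((p - 1) * sin φ - (φ - θ) * cos φ) / (φ - θ) := by
    rw [gapDeriv2, rpow_sub ht, rpow_two]
    field_simp [(rpow_pos_of_pos ht p).ne']
    linear_combination (1 - p) * heq
  rw [hval]
  exact div_pos (by linarith [one_sub_mul_sin_add_mul_cos_neg hp hθ hφ heq]) ht

section A

variable {p θ φ : ℝ}

theorem gap_div_rpow_pos (hp : p ∈ Ioc 0 1) (hθ : |θ| ≤ π / 2) (hφ : φ ∈ Ioo |θ| π)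
    (heq : p * (cos φ - cos θ) + (φ - θ) * sin φ = 0) {x : ℝ} (hx : θ < x) (hxφ : x ≠ φ) :
    0 < gap ((cos θ - cos φ) / (φ - θ) ^ p) p θ x := by
  have hθφ : θ < φ := (le_abs_self θ).trans_lt hφ.1
  have hB := div_pos (cos_sub_cos_pos hφ.1 hφ.2.le) (rpow_pos_of_pos (sub_pos.2 hθφ) p)
  exact gap_pos hB (Ioc_subset_Icc_self hp) hφ (gap_eq_zero hθφ) (gapDeriv_eq_zero hθφ heq)
    (gapDeriv2_pos hp hθ hφ heq) hx hxφ

theorem A_eq_div_rpow (hp : p ∈ Ioc 0 1) (hθ : |θ| ≤ π / 2) (hφ : φ ∈ Ioo |θ| π)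
    (heq : p * (cos φ - cos θ) + (φ - θ) * sin φ = 0) :
    A p θ = (cos θ - cos φ) / (φ - θ) ^ p := by
  refine IsGreatest.csSup_eq ⟨⟨φ, ⟨(le_abs_self θ).trans_lt hφ.1, hφ.2⟩, rfl⟩, ?_⟩
  rintro _ ⟨x, hx, rfl⟩
  rw [div_le_iff₀ (rpow_pos_of_pos (sub_pos.2 hx.1) p)]
  rcases eq_or_ne x φ with rfl | hxφ
  · rw [div_mul_cancel₀ _ (rpow_pos_of_pos (sub_pos.2 hx.1) p).ne']
  · have := gap_div_rpow_pos hp hθ hφ heq hx.1 hxφ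
    rw [gap] at this
    linarith

theorem cos_sub_A_mul_rpow_le_cos_and_eq_iff (hp : p ∈ Ioc 0 1) (hθ : |θ| ≤ π / 2)
    (hφ : φ ∈ Ioo |θ| π)
    (heq : p * (cos φ - cos θ) + (φ - θ) * sin φ = 0) {x : ℝ} (hx : θ ≤ x) :
    cos θ - A p θ * (x - θ) ^ p ≤ cos x ∧
      (cos x = cos θ - A p θ * (x - θ) ^ p ↔ x = θ ∨ x = φ) := by
  rw [A_eq_div_rpow hp hθ hφ heq]
  rcases hx.eq_or_lt with rfl | hx
  · simp [zero_rpow hp.1.ne']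
  rcases eq_or_ne x φ with rfl | hxφ
  · rw [div_mul_cancel₀ _ (rpow_pos_of_pos (sub_pos.2 hx) p).ne']
    simp
  · have := gap_div_rpow_pos hp hθ hφ heq hx hxφ
    rw [gap] at this
    refine ⟨by linarith, ?_⟩
    simp only [hx.ne', hxφ, or_self, iff_false]
    exact fun h => by linarith

end A

theorem stmt6 (p θ φp φm : ℝ) (hp : p ∈ Set.Ioc (0 : ℝ) 1)
    (hθ : θ ∈ Set.Icc (-(Real.pi / 2)) (Real.pi / 2))
    (hφp : φp ∈ Set.Ioo |θ| Real.pi ∧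
      p * (Real.cos φp - Real.cos θ) + (φp - θ) * Real.sin φp = 0)
    (hφm : -φm ∈ Set.Ioo |θ| Real.pi ∧
      p * (Real.cos (-φm) - Real.cos (-θ)) + (-φm - -θ) * Real.sin (-φm) = 0) :
    (∀ x : ℝ, θ ≤ x → Real.cos θ - A p θ * (x - θ) ^ p ≤ Real.cos x) ∧
    (∀ x : ℝ, x < θ → Real.cos θ - A p (-θ) * (θ - x) ^ p ≤ Real.cos x) ∧
    (∀ x : ℝ,
      (Real.cos x =
        if θ ≤ x then Real.cos θ - A p θ * (x - θ) ^ p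
        else Real.cos θ - A p (-θ) * (θ - x) ^ p) ↔ (x = θ ∨ x = φp ∨ x = φm)) := by
  have hθ' : |θ| ≤ π / 2 := abs_le.2 hθ
  have hθφp : θ < φp := (le_abs_self θ).trans_lt hφp.1.1
  have hφmθ : φm < θ := by linarith [neg_abs_le θ, hφm.1.1]
  have hright := fun x (hx : θ ≤ x) =>
    cos_sub_A_mul_rpow_le_cos_and_eq_iff hp hθ' hφp.1 hφp.2 hx
  have hleft := fun x (hx : x < θ) =>
    cos_sub_A_mul_rpow_le_cos_and_eq_iff hp (by rwa [abs_neg]) (by rw [abs_neg]; exact hφm.1)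
      hφm.2 (x := -x) (by linarith)
  simp only [cos_neg, neg_sub_neg, neg_inj] at hleft
  refine ⟨fun x hx => (hright x hx).1, fun x hx => (hleft x hx).1, fun x => ?_⟩
  split_ifs with hx
  · rw [(hright x hx).2]
    simp [(hφmθ.trans_le hx).ne']
  · push Not at hx
    rw [(hleft x hx).2]
    simp [hx.ne, (hx.trans hθφp).ne]
end

section
/- Let p ∈ (0,1], and for θ ∈ [−π/2, π/2] set φ⁺(θ) = φ_p(θ) and φ⁻(θ) = −φ_p(−θ). Then for all θ ∈ [−π/2, π/2]: φ⁺(θ) + θ ∈ [0, 3π/2), φ⁺(θ) − θ ∈ [0, 3π/2), φ⁻(θ) + θ ∈ (−3π/2, 0], and φ⁻(θ) − θ ∈ (−3π/2, 0]. Moreover, the functions θ ↦ φ⁺(θ) − θ and θ ↦ φ⁻(θ) − θ are strictly decreasing on [−π/2, π/2], and the functions θ ↦ φ⁺(θ) + θ and θ ↦ φ⁻(θ) + θ are strictly increasing on [−π/2, π/2]. -/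
/-!
In the coordinates `a = (x - θ) / 2`, `w = (x + θ) / 2` the equation defining `φ_p` reads
`a sin (a + w) = p sin a sin w`, to be solved in the triangle `0 < a`, `0 < w`, `a + w < π`.
Where the left side minus the right side is `≤ 0`, it is strictly decreasing both in `w` and
in `a`, so no two solutions are comparable in the product order. Along `θ ↦ (a, w)` the
difference `w - a = θ` increases, hence `a = (φ⁺(θ) - θ) / 2` decreases and
`w = (φ⁺(θ) + θ) / 2` increases; `φ⁻` is the reflection of `φ⁺`.
-/

open Real Set

theorem neg_of_hasDerivAt_neg_of_nonpos {f f' : ℝ → ℝ} {a b : ℝ} (hab : a < b)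
    (hf : ∀ x ∈ Icc a b, HasDerivAt f (f' x) x) (hf' : ∀ x ∈ Icc a b, f x ≤ 0 → f' x < 0)
    (ha : f a ≤ 0) : f b < 0 := by
  have hcont : ContinuousOn f (Icc a b) := fun x hx => (hf x hx).continuousAt.continuousWithinAt
  have hnonpos : ∀ x ∈ Icc a b, f x ≤ 0 :=
    image_le_of_deriv_right_lt_deriv_boundary hcont
      (fun x hx => (hf x (Ico_subset_Icc_self hx)).hasDerivWithinAt) ha
      (fun _ => hasDerivAt_const _ (0 : ℝ))
      (fun x hx hfx => hf' x (Ico_subset_Icc_self hx) hfx.le)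
  have hanti : StrictAntiOn f (Icc a b) :=
    strictAntiOn_of_hasDerivWithinAt_neg (convex_Icc a b) hcont
      (fun x hx => (hf x (interior_subset hx)).hasDerivWithinAt)
      (fun x hx => hf' x (interior_subset hx) (hnonpos x (interior_subset hx)))
  exact (hanti (left_mem_Icc.2 hab.le) (right_mem_Icc.2 hab.le) hab).trans_le ha

noncomputable def halfAngleFn (p a w : ℝ) : ℝ := a * sin (a + w) - p * sin a * sin w

theorem two_mul_halfAngleFn (p θ x : ℝ) :
    2 * halfAngleFn p ((x - θ) / 2) ((x + θ) / 2) =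
      p * (cos x - cos θ) + (x - θ) * sin x := by
  have hx : x = (x - θ) / 2 + (x + θ) / 2 := by ring
  have hθ : θ = (x + θ) / 2 - (x - θ) / 2 := by ring
  conv_rhs => rw [hx, cos_add, sin_add]; rw [hθ, cos_sub]
  unfold halfAngleFn
  rw [sin_add]
  ring_nf

theorem halfAngleFn_neg_of_lt_right {p a w w' : ℝ} (ha : 0 < a) (ha' : a < π) (hw : 0 < w)
    (hww' : w < w') (hw' : w' < π) (hg : halfAngleFn p a w ≤ 0) : halfAngleFn p a w' < 0 := by
  have hsa : 0 < a * sin a := mul_pos ha (sin_pos_of_pos_of_lt_pi ha ha')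
  have hsw : 0 < sin w := sin_pos_of_pos_of_lt_pi hw (by linarith)
  have hsw' : 0 < sin w' := sin_pos_of_pos_of_lt_pi (by linarith) hw'
  have hsd : 0 < sin (w' - w) := sin_pos_of_pos_of_lt_pi (by linarith) (by linarith)
  have hcross : sin w * halfAngleFn p a w' - sin w' * halfAngleFn p a w =
      -(a * sin a) * sin (w' - w) := by
    unfold halfAngleFn; rw [sin_add, sin_add, sin_sub]; ring
  have : sin w * halfAngleFn p a w' < 0 := by nlinarith [mul_pos hsa hsd]
  exact neg_of_mul_neg_right this hsw.le

theorem hasDerivAt_halfAngleFn_left (p a w : ℝ) :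
    HasDerivAt (fun a => halfAngleFn p a w)
      (sin (a + w) + a * cos (a + w) - p * cos a * sin w) a := by
  have h := ((hasDerivAt_id' a).fun_mul ((hasDerivAt_id' a).add_const w).sin).fun_sub
    (((hasDerivAt_sin a).const_mul p).mul_const (sin w))
  exact h.congr_deriv (by ring)

theorem halfAngleFn_deriv_left_neg {p a w : ℝ} (hp : p ≤ 1) (ha : 0 < a) (hw : 0 < w)
    (haw : a + w < π) (hg : halfAngleFn p a w ≤ 0) :
    sin (a + w) + a * cos (a + w) - p * cos a * sin w < 0 := by
  by_contra! hD
  unfold halfAngleFn at hg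
  have hsa : 0 < sin a := sin_pos_of_pos_of_lt_pi ha (by linarith)
  have hsw : 0 < sin w := sin_pos_of_pos_of_lt_pi hw (by linarith)
  have hsaw : 0 < sin (a + w) := sin_pos_of_pos_of_lt_pi (by linarith) haw
  have hsin_lt : sin a < a := sin_lt ha
  have hg₁ : a * sin (a + w) ≤ sin a * sin w := by nlinarith [mul_pos hsa hsw]
  rcases le_or_gt 0 (cos a) with hca | hca
  -- Eliminating `p` between the two inequalities gives `a sin w ≤ sin a sin (a + w)`, the
  -- mirror image of `hg₁`; their sum forces `a ≤ sin a`.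
  · have hsw_eq : sin w = sin (a + w) * cos a - cos (a + w) * sin a := by
      rw [← sin_sub, add_sub_cancel_left]
    have hD₁ : a * sin w ≤ sin a * sin (a + w) := by
      nlinarith [mul_le_mul_of_nonneg_left hg hca, mul_le_mul_of_nonneg_left hD hsa.le]
    nlinarith [mul_lt_mul_of_pos_right (sub_pos.2 hsin_lt) (add_pos hsw hsaw)]
  · have ha₂ : π / 2 < a := by
      by_contra! h
      exact hca.not_ge (cos_nonneg_of_mem_Icc ⟨by linarith, h⟩)
    have hcaw : cos (a + w) < 0 := cos_neg_of_pi_div_two_lt_of_lt (by linarith) (by linarith)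
    have hD₁ : -(a * cos (a + w)) ≤ sin a * cos w := by
      have : sin (a + w) - cos a * sin w = sin a * cos w := by rw [sin_add]; ring
      nlinarith [mul_pos (neg_pos.2 hca) hsw]
    -- Squaring and adding `hg₁` and `hD₁` gives `a² ≤ sin² a`.
    have h₁ := mul_self_le_mul_self (by positivity) hg₁
    have h₂ := mul_self_le_mul_self (by nlinarith) hD₁
    nlinarith [sin_sq_add_cos_sq (a + w), sin_sq_add_cos_sq w,
      mul_lt_mul'' hsin_lt hsin_lt hsa.le hsa.le]

theorem halfAngleFn_neg_of_lt_left {p a a' w : ℝ} (hp : p ≤ 1) (ha : 0 < a) (haa' : a < a')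
    (hw : 0 < w) (ha'w : a' + w < π) (hg : halfAngleFn p a w ≤ 0) : halfAngleFn p a' w < 0 :=
  neg_of_hasDerivAt_neg_of_nonpos (f := fun x => halfAngleFn p x w) haa'
    (fun x _ => hasDerivAt_halfAngleFn_left p x w)
    (fun x hx => halfAngleFn_deriv_left_neg hp (ha.trans_le hx.1) hw (by linarith [hx.2])) hg

theorem halfAngleFn_neg_of_lt {p a w a' w' : ℝ} (hp : p ≤ 1) (ha : 0 < a) (hw : 0 < w)
    (h' : a' + w' < π) (hlt : (a, w) < (a', w')) (hg : halfAngleFn p a w ≤ 0) :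
    halfAngleFn p a' w' < 0 := by
  rcases Prod.lt_iff.1 hlt with ⟨haa', hww'⟩ | ⟨haa', hww'⟩
  · have hg' : halfAngleFn p a w' ≤ 0 := by
      rcases hww'.eq_or_lt with rfl | hww'
      · exact hg
      · exact (halfAngleFn_neg_of_lt_right ha (by linarith) hw hww' (by linarith) hg).le
    exact halfAngleFn_neg_of_lt_left hp ha haa' (by linarith) h' hg'
  · have hg' := halfAngleFn_neg_of_lt_right ha (by linarith) hw hww' (by linarith) hg
    rcases haa'.eq_or_lt with rfl | haa'
    · exact hg'
    · exact halfAngleFn_neg_of_lt_left hp ha haa' (by linarith) h' hg'.le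

theorem lt_and_lt_of_halfAngleFn_eq_zero {p a₁ w₁ a₂ w₂ : ℝ} (hp : p ≤ 1)
    (ha₁ : 0 < a₁) (hw₁ : 0 < w₁) (h₁ : a₁ + w₁ < π) (hg₁ : halfAngleFn p a₁ w₁ = 0)
    (ha₂ : 0 < a₂) (hw₂ : 0 < w₂) (h₂ : a₂ + w₂ < π) (hg₂ : halfAngleFn p a₂ w₂ = 0)
    (h : w₁ - a₁ < w₂ - a₂) : a₂ < a₁ ∧ w₁ < w₂ := by
  constructor
  · by_contra! ha
    exact (halfAngleFn_neg_of_lt hp ha₁ hw₁ h₂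
      (Prod.lt_iff.2 (Or.inr ⟨ha, by linarith⟩)) hg₁.le).ne hg₂
  · by_contra! hw
    exact (halfAngleFn_neg_of_lt hp ha₂ hw₂ h₁
      (Prod.lt_iff.2 (Or.inl ⟨by linarith, hw⟩)) hg₂.le).ne hg₁

theorem strictAntiOn_sub_and_strictMonoOn_add {p : ℝ} (hp : p ≤ 1) {Φ : ℝ → ℝ} {s : Set ℝ}
    (hΦ : ∀ θ ∈ s, Φ θ ∈ Ioo |θ| π ∧ p * (cos (Φ θ) - cos θ) + (Φ θ - θ) * sin (Φ θ) = 0) :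
    StrictAntiOn (fun θ => Φ θ - θ) s ∧ StrictMonoOn (fun θ => Φ θ + θ) s := by
  have hlt : ∀ θ₁ ∈ s, ∀ θ₂ ∈ s, θ₁ < θ₂ →
      Φ θ₂ - θ₂ < Φ θ₁ - θ₁ ∧ Φ θ₁ + θ₁ < Φ θ₂ + θ₂ := by
    intro θ₁ h₁ θ₂ h₂ h
    obtain ⟨⟨hlo₁, hhi₁⟩, hz₁⟩ := hΦ θ₁ h₁
    obtain ⟨⟨hlo₂, hhi₂⟩, hz₂⟩ := hΦ θ₂ h₂
    rw [← two_mul_halfAngleFn, mul_eq_zero_iff_left two_ne_zero] at hz₁ hz₂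
    obtain ⟨hlo₁', hlo₁''⟩ := abs_lt.1 hlo₁
    obtain ⟨hlo₂', hlo₂''⟩ := abs_lt.1 hlo₂
    have := lt_and_lt_of_halfAngleFn_eq_zero hp (by linarith) (by linarith) (by linarith) hz₁
      (by linarith) (by linarith) (by linarith) hz₂ (by linarith)
    constructor <;> linarith
  exact ⟨fun θ₁ h₁ θ₂ h₂ h => (hlt θ₁ h₁ θ₂ h₂ h).1, fun θ₁ h₁ θ₂ h₂ h => (hlt θ₁ h₁ θ₂ h₂ h).2⟩

theorem stmt8 (p : ℝ) (hp : p ∈ Set.Ioc (0 : ℝ) 1) (Φ : ℝ → ℝ)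
    (hΦ : ∀ θ ∈ Set.Icc (-(Real.pi / 2)) (Real.pi / 2),
      Φ θ ∈ Set.Ioo |θ| Real.pi ∧
      p * (Real.cos (Φ θ) - Real.cos θ) + (Φ θ - θ) * Real.sin (Φ θ) = 0) :
    (∀ θ ∈ Set.Icc (-(Real.pi / 2)) (Real.pi / 2),
      Φ θ + θ ∈ Set.Ico (0 : ℝ) (3 * Real.pi / 2) ∧
      Φ θ - θ ∈ Set.Ico (0 : ℝ) (3 * Real.pi / 2) ∧
      -Φ (-θ) + θ ∈ Set.Ioc (-(3 * Real.pi / 2)) 0 ∧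
      -Φ (-θ) - θ ∈ Set.Ioc (-(3 * Real.pi / 2)) 0) ∧
    StrictAntiOn (fun θ => Φ θ - θ) (Set.Icc (-(Real.pi / 2)) (Real.pi / 2)) ∧
    StrictAntiOn (fun θ => -Φ (-θ) - θ) (Set.Icc (-(Real.pi / 2)) (Real.pi / 2)) ∧
    StrictMonoOn (fun θ => Φ θ + θ) (Set.Icc (-(Real.pi / 2)) (Real.pi / 2)) ∧
    StrictMonoOn (fun θ => -Φ (-θ) + θ) (Set.Icc (-(Real.pi / 2)) (Real.pi / 2)) := by
  have hneg : ∀ θ ∈ Icc (-(π / 2)) (π / 2), -θ ∈ Icc (-(π / 2)) (π / 2) :=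
    fun θ hθ => ⟨by linarith [hθ.2], by linarith [hθ.1]⟩
  obtain ⟨hsub, hadd⟩ := strictAntiOn_sub_and_strictMonoOn_add hp.2 hΦ
  refine ⟨fun θ hθ => ?_, hsub, fun θ₁ h₁ θ₂ h₂ h => ?_, hadd, fun θ₁ h₁ θ₂ h₂ h => ?_⟩
  · obtain ⟨⟨hlo, hhi⟩, -⟩ := hΦ θ hθ
    obtain ⟨⟨hlo', hhi'⟩, -⟩ := hΦ (-θ) (hneg θ hθ)
    rw [abs_lt] at hlo
    rw [abs_neg, abs_lt] at hlo'
    refine ⟨⟨?_, ?_⟩, ⟨?_, ?_⟩, ⟨?_, ?_⟩, ⟨?_, ?_⟩⟩ <;> linarith [hθ.1, hθ.2]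
  · have := hsub (hneg θ₂ h₂) (hneg θ₁ h₁) (neg_lt_neg h)
    dsimp only at this ⊢
    linarith
  · have := hadd (hneg θ₂ h₂) (hneg θ₁ h₁) (neg_lt_neg h)
    dsimp only at this ⊢
    linarith
end

section
/- Let a < b be real numbers and let w : ℝ → ℝ be twice differentiable on [a, b] with w(a) ≥ 0, w(b) ≤ 0, w′(b) < 0, and w″(x) ≤ 0 for all x ∈ [a, b]. Define the Newton iterates x₀ = b and x_{n+1} = x_n − w(x_n)/w′(x_n). Then every iterate lies in [a, b], the sequence (x_n) is nonincreasing, and it converges to a point L ∈ [a, b] with w(L) = 0. -/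
/-!
On `[a, b]` the function `w` is concave, so it lies below each of its tangent lines. Since
`w a ≥ 0`, a point `z ∈ [a, b]` with `w z < 0` must have `w' z < 0`, and the Newton step from `z`
is the zero of the tangent line at `z`: it moves left, stays to the right of `a` (the tangent line
is `≥ w a ≥ 0` there), and lands where `w` is again `≤ 0`. Hence the iterates decrease inside
`[a, b]` and converge to some `L` with `w L ≤ 0`; were `w L < 0`, then `w' L < 0` and `L` would be a
fixed point of the continuous Newton map, forcing `w L = 0`.
-/

open Set Filter Topology

theorem concaveOn_Icc_of_deriv2_nonpos {f : ℝ → ℝ} {a b : ℝ}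
    (hf : ∀ x ∈ Icc a b, DifferentiableAt ℝ f x)
    (hf' : ∀ x ∈ Icc a b, DifferentiableAt ℝ (deriv f) x)
    (hf'' : ∀ x ∈ Icc a b, deriv (deriv f) x ≤ 0) : ConcaveOn ℝ (Icc a b) f :=
  concaveOn_of_deriv2_nonpos (convex_Icc a b)
    (fun x hx => (hf x hx).continuousAt.continuousWithinAt)
    (fun x hx => (hf x (interior_subset hx)).differentiableWithinAt)
    (fun x hx => (hf' x (interior_subset hx)).differentiableWithinAt)
    (fun x hx => by simpa using hf'' x (interior_subset hx))

theorem ConcaveOn.le_add_deriv_mul_sub {S : Set ℝ} {f : ℝ → ℝ} {p q : ℝ}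
    (hf : ConcaveOn ℝ S f) (hp : p ∈ S) (hq : q ∈ S) (hfd : DifferentiableAt ℝ f p) :
    f q ≤ f p + deriv f p * (q - p) := by
  rcases lt_trichotomy q p with h | rfl | h
  · have hslope := hf.deriv_le_slope hq hp h hfd
    rw [slope_def_field, le_div_iff₀ (sub_pos.2 h)] at hslope
    linarith
  · simp
  · have hslope := hf.slope_le_deriv hp hq h hfd
    rw [slope_def_field, div_le_iff₀ (sub_pos.2 h)] at hslope
    linarith

noncomputable def newtonMap (w : ℝ → ℝ) (z : ℝ) : ℝ := z - w z / deriv w z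

section Newton

variable {w : ℝ → ℝ} {a b z : ℝ}

theorem deriv_mul_newtonMap_sub (h : deriv w z ≠ 0) :
    deriv w z * (newtonMap w z - z) = -w z := by
  unfold newtonMap
  field_simp
  ring

theorem newtonMap_eq_self_iff (h : deriv w z ≠ 0) : newtonMap w z = z ↔ w z = 0 := by
  simp [newtonMap, h]

theorem continuousAt_newtonMap (hd : DifferentiableAt ℝ w z)
    (hd' : DifferentiableAt ℝ (deriv w) z) (h : deriv w z ≠ 0) :
    ContinuousAt (newtonMap w) z :=
  continuousAt_id.sub (hd.continuousAt.div hd'.continuousAt h)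

theorem ConcaveOn.deriv_neg_of_neg (hc : ConcaveOn ℝ (Icc a b) w) (hwa : 0 ≤ w a)
    (hz : z ∈ Icc a b) (hdz : DifferentiableAt ℝ w z) (hwz : w z < 0) : deriv w z < 0 := by
  have htan := hc.le_add_deriv_mul_sub hz (left_mem_Icc.2 (hz.1.trans hz.2)) hdz
  by_contra! h
  nlinarith [mul_nonpos_of_nonneg_of_nonpos h (sub_nonpos.2 hz.1)]

theorem ConcaveOn.newtonMap_mem_Icc (hc : ConcaveOn ℝ (Icc a b) w) (hwa : 0 ≤ w a)
    (hz : z ∈ Icc a b) (hdz : DifferentiableAt ℝ w z) (hwz : w z ≤ 0) :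
    newtonMap w z ∈ Icc a z ∧ w (newtonMap w z) ≤ 0 := by
  rcases hwz.eq_or_lt with h0 | hneg
  · simp [newtonMap, h0, hz.1]
  have hd := hc.deriv_neg_of_neg hwa hz hdz hneg
  have hzero := deriv_mul_newtonMap_sub hd.ne
  have hle : newtonMap w z ≤ z := by
    have := div_pos_of_neg_of_neg hneg hd
    unfold newtonMap
    linarith
  have hge : a ≤ newtonMap w z := by
    have htan := hc.le_add_deriv_mul_sub hz (left_mem_Icc.2 (hz.1.trans hz.2)) hdz
    by_contra! h
    nlinarith [mul_neg_of_neg_of_pos hd (sub_pos.2 h)]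
  refine ⟨⟨hge, hle⟩, ?_⟩
  have htan := hc.le_add_deriv_mul_sub hz ⟨hge, hle.trans hz.2⟩ hdz
  linarith

theorem ConcaveOn.newton_iterate_mem_Icc (hc : ConcaveOn ℝ (Icc a b) w) (hwa : 0 ≤ w a)
    (hd : ∀ x ∈ Icc a b, DifferentiableAt ℝ w x) (hab : a ≤ b) (hwb : w b ≤ 0)
    {x : ℕ → ℝ} (hx0 : x 0 = b) (hxs : ∀ n, x (n + 1) = newtonMap w (x n)) (n : ℕ) :
    x n ∈ Icc a b ∧ w (x n) ≤ 0 := by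
  induction n with
  | zero => rw [hx0]; exact ⟨⟨hab, le_rfl⟩, hwb⟩
  | succ n ih =>
    obtain ⟨hmem, hnonpos⟩ := hc.newtonMap_mem_Icc hwa ih.1 (hd _ ih.1) ih.2
    exact hxs n ▸ ⟨⟨hmem.1, hmem.2.trans ih.1.2⟩, hnonpos⟩

theorem ConcaveOn.eq_zero_of_tendsto_newton (hc : ConcaveOn ℝ (Icc a b) w) (hwa : 0 ≤ w a)
    {L : ℝ} (hL : L ∈ Icc a b) (hdL : DifferentiableAt ℝ w L)
    (hdL' : DifferentiableAt ℝ (deriv w) L) (hwL : w L ≤ 0) {x : ℕ → ℝ}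
    (hx : Tendsto x atTop (𝓝 L)) (hxs : ∀ n, x (n + 1) = newtonMap w (x n)) : w L = 0 := by
  by_contra hne
  have hd := (hc.deriv_neg_of_neg hwa hL hdL (hwL.lt_of_ne hne)).ne
  have hfix : newtonMap w L = L := by
    refine tendsto_nhds_unique ?_ (hx.comp (tendsto_add_atTop_nat 1))
    simpa only [Function.comp_def, hxs] using
      (continuousAt_newtonMap hdL hdL' hd).tendsto.comp hx
  exact hne ((newtonMap_eq_self_iff hd).1 hfix)

end Newton

theorem stmt11_general (a b : ℝ) (hab : a < b) (w : ℝ → ℝ)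
    (hw : ∀ x ∈ Set.Icc a b, DifferentiableAt ℝ w x)
    (hw' : ∀ x ∈ Set.Icc a b, DifferentiableAt ℝ (deriv w) x)
    (hwa : 0 ≤ w a) (hwb : w b ≤ 0)
    (hw'' : ∀ x ∈ Set.Icc a b, deriv (deriv w) x ≤ 0)
    (x : ℕ → ℝ) (hx0 : x 0 = b)
    (hxs : ∀ n : ℕ, x (n + 1) = x n - w (x n) / deriv w (x n)) :
    (∀ n : ℕ, x n ∈ Set.Icc a b) ∧
    (∀ n : ℕ, x (n + 1) ≤ x n) ∧
    ∃ L ∈ Set.Icc a b, Filter.Tendsto x Filter.atTop (nhds L) ∧ w L = 0 := by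
  have hc := concaveOn_Icc_of_deriv2_nonpos hw hw' hw''
  have hinv := hc.newton_iterate_mem_Icc hwa hw hab.le hwb hx0 hxs
  have hmono : ∀ n, x (n + 1) ≤ x n := fun n =>
    (hxs n).symm ▸ (hc.newtonMap_mem_Icc hwa (hinv n).1 (hw _ (hinv n).1) (hinv n).2).1.2
  have hbdd : BddBelow (range x) := ⟨a, by rintro _ ⟨n, rfl⟩; exact (hinv n).1.1⟩
  have hlim := tendsto_atTop_ciInf (antitone_nat_of_succ_le hmono) hbdd
  set L := ⨅ n, x n
  have hL : L ∈ Icc a b := isClosed_Icc.mem_of_tendsto hlim (.of_forall fun n => (hinv n).1)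
  have hwL : w L ≤ 0 :=
    le_of_tendsto ((hw L hL).continuousAt.tendsto.comp hlim) (.of_forall fun n => (hinv n).2)
  exact ⟨fun n => (hinv n).1, hmono, L, hL, hlim,
    hc.eq_zero_of_tendsto_newton hwa hL (hw L hL) (hw' L hL) hwL hlim hxs⟩

theorem stmt11 (a b : ℝ) (hab : a < b) (w : ℝ → ℝ)
    (hw : ∀ x ∈ Set.Icc a b, DifferentiableAt ℝ w x)
    (hw' : ∀ x ∈ Set.Icc a b, DifferentiableAt ℝ (deriv w) x)
    (hwa : 0 ≤ w a) (hwb : w b ≤ 0) (hw'b : deriv w b < 0)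
    (hw'' : ∀ x ∈ Set.Icc a b, deriv (deriv w) x ≤ 0)
    (x : ℕ → ℝ) (hx0 : x 0 = b)
    (hxs : ∀ n : ℕ, x (n + 1) = x n - w (x n) / deriv w (x n)) :
    (∀ n : ℕ, x n ∈ Set.Icc a b) ∧
    (∀ n : ℕ, x (n + 1) ≤ x n) ∧
    ∃ L ∈ Set.Icc a b, Filter.Tendsto x Filter.atTop (nhds L) ∧ w L = 0 :=
  stmt11_general a b hab w hw hw' hwa hwb hw'' x hx0 hxs
end

section
/- Let n ∈ ℕ, let a : Fin n → ℂ satisfy ∑_j ‖a_j‖² = 1, let E : Fin n → ℝ, let τ ≥ 0, and set √ε = ‖∑_j ‖a_j‖²·exp(−i·E_j·τ)‖. Then for every p ∈ (0,1], every θ ∈ [−π/2, π/2], and every E_r ∈ ℝ: √ε ≥ cos θ − (A_{p,θ}·∑_{j : E_j ≥ E_r} ‖a_j‖²·(E_j − E_r)^p + A_{p,−θ}·∑_{j : E_j < E_r} ‖a_j‖²·(E_r − E_j)^p)·τ^p. -/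
open Real Topology

section CosineBound

variable {p θ : ℝ}

lemma cos_sub_cos_le_of_le {u v : ℝ} (h : u ≤ v) : cos u - cos v ≤ v - u := by
  simpa [abs_of_nonpos (sub_nonpos.mpr h)] using (le_abs_self _).trans (abs_cos_sub_cos_le u v)

lemma bddAbove_Aset (hp₀ : 0 < p) (hp₁ : p ≤ 1) : BddAbove (Aset p θ) := by
  refine ⟨2 * π, ?_⟩
  rintro _ ⟨x, hx, rfl⟩
  have hd : 0 < x - θ := sub_pos.mpr hx.1
  rw [div_le_iff₀ (rpow_pos_of_pos hd p)]
  have hlip := cos_sub_cos_le_of_le hx.1.le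
  rcases le_or_gt (x - θ) 1 with hle | hgt
  · have : x - θ ≤ (x - θ) ^ p := by
      simpa using rpow_le_rpow_of_exponent_ge hd hle hp₁
    nlinarith [pi_gt_three]
  · have : 1 ≤ (x - θ) ^ p := one_le_rpow hgt.le hp₀.le
    nlinarith [pi_gt_three, cos_le_one θ, neg_one_le_cos x]

lemma le_A (hp₀ : 0 < p) (hp₁ : p ≤ 1) {x : ℝ} (hx : x ∈ Set.Ioo θ π) :
    (cos θ - cos x) / (x - θ) ^ p ≤ A p θ :=
  le_csSup (bddAbove_Aset hp₀ hp₁) ⟨x, hx, rfl⟩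

lemma cos_add_one_le_A_mul (hp₀ : 0 < p) (hp₁ : p ≤ 1) (hθ : θ < π) :
    cos θ + 1 ≤ A p θ * (π - θ) ^ p := by
  have hdp : 0 < (π - θ) ^ p := rpow_pos_of_pos (sub_pos.mpr hθ) p
  rw [← div_le_iff₀ hdp]
  set f : ℝ → ℝ := fun x => (cos θ - cos x) / (x - θ) ^ p
  have hf : ContinuousAt f π :=
    ((continuous_const.sub continuous_cos).continuousAt).div
      ((continuous_id.sub continuous_const).continuousAt.rpow_const
        (Or.inl (sub_pos.mpr hθ).ne')) hdp.ne'
  have : (𝓝[Set.Ioo θ π] π).NeBot :=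
    mem_closure_iff_nhdsWithin_neBot.mp (by rw [closure_Ioo hθ.ne]; exact ⟨hθ.le, le_rfl⟩)
  have hlim : f π ≤ A p θ :=
    le_of_tendsto hf.continuousWithinAt.tendsto
      (eventually_nhdsWithin_of_forall fun x hx => le_A hp₀ hp₁ hx)
  simpa [f, cos_pi, sub_neg_eq_add] using hlim

lemma A_nonneg (hp₀ : 0 < p) (hp₁ : p ≤ 1) (hθ : θ < π) : 0 ≤ A p θ := by
  have h := cos_add_one_le_A_mul hp₀ hp₁ hθ
  have hdp : 0 < (π - θ) ^ p := rpow_pos_of_pos (sub_pos.mpr hθ) p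
  exact nonneg_of_mul_nonneg_left (by linarith [neg_one_le_cos θ]) hdp

lemma cos_sub_cos_add_le_A_mul_rpow (hp₀ : 0 < p) (hp₁ : p ≤ 1) (hθ : θ < π)
    {y : ℝ} (hy : 0 ≤ y) : cos θ - cos (θ + y) ≤ A p θ * y ^ p := by
  rcases hy.eq_or_lt with rfl | hy₀
  · simp [zero_rpow hp₀.ne']
  rcases lt_or_ge y (π - θ) with hsmall | hbig
  · have h := le_A hp₀ hp₁ (show θ + y ∈ Set.Ioo θ π from ⟨by linarith, by linarith⟩)
    rwa [add_sub_cancel_left, div_le_iff₀ (rpow_pos_of_pos hy₀ p)] at h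
  · calc cos θ - cos (θ + y) ≤ cos θ + 1 := by linarith [neg_one_le_cos (θ + y)]
      _ ≤ A p θ * (π - θ) ^ p := cos_add_one_le_A_mul hp₀ hp₁ hθ
      _ ≤ A p θ * y ^ p :=
        mul_le_mul_of_nonneg_left (rpow_le_rpow (by linarith) hbig hp₀.le) (A_nonneg hp₀ hp₁ hθ)

variable {τ e Er : ℝ}

lemma cos_sub_A_mul_le_cos_of_le (hp₀ : 0 < p) (hp₁ : p ≤ 1) (hθ : θ < π) (hτ : 0 ≤ τ)
    (he : Er ≤ e) : cos θ - A p θ * τ ^ p * (e - Er) ^ p ≤ cos (θ + (e - Er) * τ) := by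
  have h := cos_sub_cos_add_le_A_mul_rpow hp₀ hp₁ hθ (mul_nonneg (sub_nonneg.mpr he) hτ)
  rw [mul_rpow (sub_nonneg.mpr he) hτ, mul_comm ((e - Er) ^ p), ← mul_assoc] at h
  linarith

lemma cos_sub_A_neg_mul_le_cos_of_lt (hp₀ : 0 < p) (hp₁ : p ≤ 1) (hθ : -π < θ) (hτ : 0 ≤ τ)
    (he : e < Er) : cos θ - A p (-θ) * τ ^ p * (Er - e) ^ p ≤ cos (θ + (e - Er) * τ) := by
  have h := cos_sub_A_mul_le_cos_of_le hp₀ hp₁ (neg_lt.mp hθ) hτ (le_of_lt (neg_lt_neg he))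
  rwa [cos_neg, neg_sub_neg, show -θ + (Er - e) * τ = -(θ + (e - Er) * τ) by ring, cos_neg] at h

end CosineBound

lemma sum_mul_sub_mul_sum_le {ι : Type*} {s : Finset ι} {w d f : ι → ℝ} {c K : ℝ}
    (hw : ∀ j ∈ s, 0 ≤ w j) (h : ∀ j ∈ s, c - K * d j ≤ f j) :
    (∑ j ∈ s, w j) * c - K * ∑ j ∈ s, w j * d j ≤ ∑ j ∈ s, w j * f j := by
  rw [Finset.sum_mul, Finset.mul_sum, ← Finset.sum_sub_distrib]
  exact Finset.sum_le_sum fun j hj => by nlinarith [mul_le_mul_of_nonneg_left (h j hj) (hw j hj)]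

lemma sum_mul_cos_le_norm_sum_mul_exp {ι : Type*} (s : Finset ι) (w φ : ι → ℝ) (ψ : ℝ) :
    ∑ j ∈ s, w j * cos (ψ + φ j) ≤ ‖∑ j ∈ s, (w j : ℂ) * Complex.exp (-Complex.I * φ j)‖ := by
  set z := ∑ j ∈ s, (w j : ℂ) * Complex.exp (-Complex.I * φ j)
  have hre : (Complex.exp ((-ψ : ℝ) * Complex.I) * z).re = ∑ j ∈ s, w j * cos (ψ + φ j) := by
    rw [Finset.mul_sum, Complex.re_sum]
    refine Finset.sum_congr rfl fun j _ => ?_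
    rw [mul_left_comm, ← Complex.exp_add,
      show (-ψ : ℝ) * Complex.I + -Complex.I * φ j = (-(ψ + φ j) : ℝ) * Complex.I by
        push_cast; ring,
      Complex.re_ofReal_mul, Complex.exp_ofReal_mul_I_re, cos_neg]
  calc ∑ j ∈ s, w j * cos (ψ + φ j) = (Complex.exp ((-ψ : ℝ) * Complex.I) * z).re := hre.symm
    _ ≤ ‖Complex.exp ((-ψ : ℝ) * Complex.I) * z‖ := Complex.re_le_norm _
    _ = ‖z‖ := by rw [norm_mul, Complex.norm_exp_ofReal_mul_I, one_mul]

theorem stmt12 (n : ℕ) (a : Fin n → ℂ) (ha : ∑ j, ‖a j‖ ^ 2 = 1)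
    (E : Fin n → ℝ) (τ : ℝ) (hτ : 0 ≤ τ)
    (p θ Er : ℝ) (hp : p ∈ Set.Ioc (0 : ℝ) 1)
    (hθ : θ ∈ Set.Icc (-(Real.pi / 2)) (Real.pi / 2)) :
    Real.cos θ -
      (A p θ * ∑ j ∈ Finset.univ.filter (fun j => Er ≤ E j),
          ‖a j‖ ^ 2 * (E j - Er) ^ p +
        A p (-θ) * ∑ j ∈ Finset.univ.filter (fun j => E j < Er),
          ‖a j‖ ^ 2 * (Er - E j) ^ p) * τ ^ p ≤
    ‖∑ j, ((‖a j‖ ^ 2 : ℝ) : ℂ) * Complex.exp (-Complex.I * (E j : ℂ) * (τ : ℂ))‖ := by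
  have hθ₁ : θ < π := by linarith [hθ.2, pi_pos]
  have hθ₀ : -π < θ := by linarith [hθ.1, pi_pos]
  set w : Fin n → ℝ := fun j => ‖a j‖ ^ 2
  set s₁ := Finset.univ.filter (fun j => Er ≤ E j)
  set s₂ := Finset.univ.filter (fun j => E j < Er)
  have hsplit (f : Fin n → ℝ) : ∑ j, f j = ∑ j ∈ s₁, f j + ∑ j ∈ s₂, f j := by
    simpa only [not_le] using (Finset.sum_filter_add_sum_filter_not _ (fun j => Er ≤ E j) f).symm
  have hweights : (∑ j ∈ s₁, w j) * cos θ + (∑ j ∈ s₂, w j) * cos θ = cos θ := by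
    rw [← add_mul, ← hsplit, ha, one_mul]
  have hle := sum_mul_sub_mul_sum_le (s := s₁) (w := w) (c := cos θ) (fun j _ => sq_nonneg _)
    fun j hj => cos_sub_A_mul_le_cos_of_le hp.1 hp.2 hθ₁ hτ (Finset.mem_filter.mp hj).2
  have hlt := sum_mul_sub_mul_sum_le (s := s₂) (w := w) (c := cos θ) (fun j _ => sq_nonneg _)
    fun j hj => cos_sub_A_neg_mul_le_cos_of_lt hp.1 hp.2 hθ₀ hτ (Finset.mem_filter.mp hj).2
  have hphase : ∑ j, w j * cos (θ + (E j - Er) * τ)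
      ≤ ‖∑ j, ((‖a j‖ ^ 2 : ℝ) : ℂ) * Complex.exp (-Complex.I * (E j : ℂ) * (τ : ℂ))‖ := by
    convert sum_mul_cos_le_norm_sum_mul_exp Finset.univ w (fun j => E j * τ) (θ - Er * τ)
      using 4 with j
    · ring
    · push_cast [mul_assoc]; rfl
  linear_combination hle + hlt + hphase - hweights - hsplit fun j => w j * cos (θ + (E j - Er) * τ)
end

section
/- Let n ∈ ℕ, let a : Fin n → ℂ satisfy ∑_j ‖a_j‖² = 1, let E : Fin n → ℝ, let τ ≥ 0, and set √ε = ‖∑_j ‖a_j‖²·exp(−i·E_j·τ)‖. Then for every p ∈ (1,2] and every E_r ∈ ℝ: √ε ≥ 1 − A_{p,0}·(∑_j ‖a_j‖²·|E_j − E_r|^p)·τ^p. -/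
open Real Set Filter Topology

lemma Aset_zero (p : ℝ) : Aset p 0 = (fun x => (1 - cos x) / x ^ p) '' Ioo 0 π := by
  simp [Aset]

lemma one_sub_cos_div_rpow_le_two {p x : ℝ} (hp₀ : 0 ≤ p) (hp₂ : p ≤ 2) (hx : 0 < x) :
    (1 - cos x) / x ^ p ≤ 2 := by
  rw [div_le_iff₀ (rpow_pos_of_pos hx p)]
  rcases le_or_gt x 1 with hx1 | hx1
  · have hsq : x ^ (2 : ℝ) ≤ x ^ p := rpow_le_rpow_of_exponent_ge hx hx1 hp₂
    rw [rpow_two] at hsq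
    nlinarith [one_sub_sq_div_two_le_cos (x := x), rpow_pos_of_pos hx p]
  · have : 1 ≤ x ^ p := one_le_rpow hx1.le hp₀
    nlinarith [neg_one_le_cos x]

lemma bddAbove_Aset_zero {p : ℝ} (hp₀ : 0 ≤ p) (hp₂ : p ≤ 2) : BddAbove (Aset p 0) := by
  refine ⟨2, ?_⟩
  rw [Aset_zero]
  rintro _ ⟨x, hx, rfl⟩
  exact one_sub_cos_div_rpow_le_two hp₀ hp₂ hx.1

lemma one_sub_cos_div_rpow_le_A {p x : ℝ} (hp₀ : 0 ≤ p) (hp₂ : p ≤ 2) (hx : x ∈ Ioo 0 π) :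
    (1 - cos x) / x ^ p ≤ A p 0 :=
  le_csSup (bddAbove_Aset_zero hp₀ hp₂) (Aset_zero p ▸ mem_image_of_mem _ hx)

lemma two_div_pi_rpow_le_A {p : ℝ} (hp₀ : 0 ≤ p) (hp₂ : p ≤ 2) : 2 / π ^ p ≤ A p 0 := by
  have : (𝓝[Ioo 0 π] π).NeBot := right_nhdsWithin_Ioo_neBot pi_pos
  have hcont : ContinuousAt (fun x => (1 - cos x) / x ^ p) π :=
    (continuous_const.sub continuous_cos).continuousAt.div
      (continuousAt_rpow_const _ _ (Or.inl pi_ne_zero)) (rpow_pos_of_pos pi_pos p).ne'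
  have hlim : Tendsto (fun x => (1 - cos x) / x ^ p) (𝓝[Ioo 0 π] π) (𝓝 (2 / π ^ p)) := by
    convert hcont.continuousWithinAt.tendsto using 2
    rw [cos_pi]; norm_num
  exact le_of_tendsto hlim (eventually_nhdsWithin_of_forall fun x hx =>
    one_sub_cos_div_rpow_le_A hp₀ hp₂ hx)

lemma one_sub_cos_le_A_mul_abs_rpow {p : ℝ} (hp₀ : 0 < p) (hp₂ : p ≤ 2) (x : ℝ) :
    1 - cos x ≤ A p 0 * |x| ^ p := by
  rcases eq_or_ne x 0 with rfl | hx0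
  · simp [zero_rpow hp₀.ne']
  rw [← cos_abs]
  have hx : 0 < |x| := abs_pos.mpr hx0
  rcases lt_or_ge |x| π with hlt | hge
  · exact (div_le_iff₀ (rpow_pos_of_pos hx p)).mp
      (one_sub_cos_div_rpow_le_A hp₀.le hp₂ ⟨hx, hlt⟩)
  · have hpi : 0 < π ^ p := rpow_pos_of_pos pi_pos p
    calc 1 - cos |x| ≤ 2 / π ^ p * π ^ p := by
          rw [div_mul_cancel₀ _ hpi.ne']; linarith [neg_one_le_cos |x|]
      _ ≤ A p 0 * |x| ^ p :=
          mul_le_mul (two_div_pi_rpow_le_A hp₀.le hp₂) (rpow_le_rpow pi_pos.le hge hp₀.le)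
            hpi.le ((div_pos two_pos hpi).le.trans (two_div_pi_rpow_le_A hp₀.le hp₂))

lemma one_sub_A_mul_sum_le_sum_mul_cos {ι : Type*} {s : Finset ι} {w x : ι → ℝ}
    (hw : ∀ j ∈ s, 0 ≤ w j) (hw₁ : ∑ j ∈ s, w j = 1) {p : ℝ} (hp₀ : 0 < p) (hp₂ : p ≤ 2) :
    1 - A p 0 * ∑ j ∈ s, w j * |x j| ^ p ≤ ∑ j ∈ s, w j * cos (x j) := by
  rw [← hw₁, Finset.mul_sum, ← Finset.sum_sub_distrib]
  refine Finset.sum_le_sum fun j hj => ?_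
  have := mul_le_mul_of_nonneg_left (one_sub_cos_le_A_mul_abs_rpow hp₀ hp₂ (x j)) (hw j hj)
  linarith

lemma sum_mul_cos_sub_le_norm_sum {ι : Type*} (s : Finset ι) (w t : ι → ℝ) (c : ℝ) :
    ∑ j ∈ s, w j * cos (t j - c) ≤ ‖∑ j ∈ s, (w j : ℂ) * Complex.exp (-Complex.I * t j)‖ := by
  set z := ∑ j ∈ s, (w j : ℂ) * Complex.exp (-Complex.I * t j)
  have hre : (Complex.exp (c * Complex.I) * z).re = ∑ j ∈ s, w j * cos (t j - c) := by
    simp only [z, Finset.mul_sum, Complex.re_sum]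
    refine Finset.sum_congr rfl fun j _ => ?_
    rw [mul_left_comm, ← Complex.exp_add,
      show (c : ℂ) * Complex.I + -Complex.I * t j = ((c - t j : ℝ) : ℂ) * Complex.I by
        push_cast; ring,
      Complex.re_ofReal_mul, Complex.exp_ofReal_mul_I_re, ← cos_neg, neg_sub]
  calc ∑ j ∈ s, w j * cos (t j - c) = (Complex.exp (c * Complex.I) * z).re := hre.symm
    _ ≤ ‖Complex.exp (c * Complex.I) * z‖ := Complex.re_le_norm _
    _ = ‖z‖ := by rw [norm_mul, Complex.norm_exp_ofReal_mul_I, one_mul]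

theorem stmt13 (n : ℕ) (a : Fin n → ℂ) (ha : ∑ j, ‖a j‖ ^ 2 = 1)
    (E : Fin n → ℝ) (τ : ℝ) (hτ : 0 ≤ τ)
    (p Er : ℝ) (hp : p ∈ Set.Ioc (1 : ℝ) 2) :
    1 - A p 0 * (∑ j, ‖a j‖ ^ 2 * |E j - Er| ^ p) * τ ^ p ≤
    ‖∑ j, ((‖a j‖ ^ 2 : ℝ) : ℂ) * Complex.exp (-Complex.I * (E j : ℂ) * (τ : ℂ))‖ := by
  have hphase : ∀ j, |(E j - Er) * τ| ^ p = |E j - Er| ^ p * τ ^ p := fun j => by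
    rw [abs_mul, abs_of_nonneg hτ, mul_rpow (abs_nonneg _) hτ]
  calc 1 - A p 0 * (∑ j, ‖a j‖ ^ 2 * |E j - Er| ^ p) * τ ^ p
      = 1 - A p 0 * ∑ j, ‖a j‖ ^ 2 * |(E j - Er) * τ| ^ p := by
        simp only [hphase, Finset.mul_sum, Finset.sum_mul, mul_assoc]
    _ ≤ ∑ j, ‖a j‖ ^ 2 * cos ((E j - Er) * τ) :=
        one_sub_A_mul_sum_le_sum_mul_cos (fun j _ => by positivity) ha
          (by linarith [hp.1]) hp.2
    _ = ∑ j, ‖a j‖ ^ 2 * cos (E j * τ - Er * τ) := by simp only [sub_mul]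
    _ ≤ ‖∑ j, ((‖a j‖ ^ 2 : ℝ) : ℂ) * Complex.exp (-Complex.I * (E j : ℂ) * (τ : ℂ))‖ := by
        simpa only [Complex.ofReal_mul, mul_assoc] using
          sum_mul_cos_sub_le_norm_sum Finset.univ (fun j => ‖a j‖ ^ 2) (fun j => E j * τ) (Er * τ)
end

section
/- (Mandelstam–Tamm bound, deduced from the optimized Lee–Chau bound.) Let n ∈ ℕ, let a : Fin n → ℂ satisfy ∑_j ‖a_j‖² = 1, let E : Fin n → ℝ, let τ ≥ 0, and set √ε = ‖∑_j ‖a_j‖²·exp(−i·E_j·τ)‖. Then for every E_r ∈ ℝ: τ² · ∑_j ‖a_j‖²·(E_j − E_r)² ≥ (arccos √ε)². In particular, taking E_r = ∑_j ‖a_j‖²·E_j gives τ·ΔE ≥ arccos(√ε), where ΔE is the energy standard deviation of the state. -/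
/-!
Write `p j = ‖a j‖ ^ 2` and `θ j = (Er - E j) * τ`; pulling out the common phase `exp (-i Er τ)`
gives `√ε = ‖∑ p j * exp (i θ j)‖ ≥ ∑ p j * cos (θ j)`. Since `sin x / x` decreases on `(0, π]`,
`t ↦ cos √t` is convex and decreasing on `[0, π²]`, so Jensen's inequality applied to the squared
phases yields `∑ p j * cos (θ j) ≥ cos √(∑ p j * θ j ^ 2)` as long as this second moment is at most
`π²`. Taking `arccos` gives `arccos √ε ≤ √(∑ p j * θ j ^ 2) = τ * √(∑ p j * (E j - Er) ^ 2)`; a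
larger second moment is harmless because `arccos ≤ π`.
-/

open Real Finset Set

lemma sin_div_le_sin_div {x y : ℝ} (hx : 0 < x) (hxy : x ≤ y) (hy : y ≤ π) :
    sin y / y ≤ sin x / x := by
  have h := strictConcaveOn_sin_Icc.concaveOn.neg.secant_mono (a := 0)
    ⟨le_rfl, pi_pos.le⟩ ⟨hx.le, hxy.trans hy⟩ ⟨hx.le.trans hxy, hy⟩ hx.ne' (hx.trans_le hxy).ne' hxy
  simp only [Pi.neg_apply, sin_zero, neg_zero, sub_zero, neg_div] at h
  exact neg_le_neg_iff.mp h

lemma convexOn_cos_sqrt : ConvexOn ℝ (Icc 0 (π ^ 2)) (fun t ↦ cos √t) := by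
  have hderiv : ∀ t ∈ Ioo 0 (π ^ 2), HasDerivAt (fun t ↦ cos √t) (-(sin √t / √t) / 2) t := by
    intro t ht
    convert ((hasDerivAt_sqrt ht.1.ne').cos) using 1
    field_simp
  refine MonotoneOn.convexOn_of_deriv (convex_Icc _ _) (by fun_prop) ?_ ?_
  · rw [interior_Icc]
    exact fun t ht ↦ (hderiv t ht).differentiableAt.differentiableWithinAt
  · rw [interior_Icc]
    intro s hs t ht hst
    rw [(hderiv s hs).deriv, (hderiv t ht).deriv]
    have := sin_div_le_sin_div (sqrt_pos.2 hs.1) (sqrt_le_sqrt hst)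
      ((sqrt_le_left pi_pos.le).2 ht.2.le)
    linarith

lemma cos_min_abs_pi_le_cos (x : ℝ) : cos (min |x| π) ≤ cos x := by
  rcases le_total |x| π with h | h
  · rw [min_eq_left h, cos_abs]
  · rw [min_eq_right h, cos_pi]
    exact neg_one_le_cos x

lemma cos_sqrt_le_sum_mul_cos {ι : Type*} (s : Finset ι) {p : ι → ℝ} (hp : ∀ j ∈ s, 0 ≤ p j)
    (hp1 : ∑ j ∈ s, p j = 1) (θ : ι → ℝ) (hV : ∑ j ∈ s, p j * θ j ^ 2 ≤ π ^ 2) :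
    cos √(∑ j ∈ s, p j * θ j ^ 2) ≤ ∑ j ∈ s, p j * cos (θ j) := by
  -- Clipping `|θ j|` to `π` can only lower the cosines and the second moment, and puts the
  -- squared phases into the domain of convexity of `cos ∘ √`.
  set φ : ι → ℝ := fun j ↦ min |θ j| π
  have hφ0 : ∀ j, 0 ≤ φ j := fun j ↦ le_min (abs_nonneg _) pi_pos.le
  have hφθ : ∀ j, φ j ^ 2 ≤ θ j ^ 2 := fun j ↦ by
    rw [← sq_abs (θ j)]; exact pow_le_pow_left₀ (hφ0 j) (min_le_left _ _) 2
  have hφV : ∑ j ∈ s, p j * φ j ^ 2 ≤ ∑ j ∈ s, p j * θ j ^ 2 :=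
    sum_le_sum fun j hj ↦ mul_le_mul_of_nonneg_left (hφθ j) (hp j hj)
  have hjensen := convexOn_cos_sqrt.map_sum_le hp hp1 (p := fun j ↦ φ j ^ 2) fun j _ ↦
    ⟨sq_nonneg _, pow_le_pow_left₀ (hφ0 j) (min_le_right _ _) 2⟩
  simp only [smul_eq_mul, sqrt_sq (hφ0 _)] at hjensen
  calc cos √(∑ j ∈ s, p j * θ j ^ 2) ≤ cos √(∑ j ∈ s, p j * φ j ^ 2) :=
        cos_le_cos_of_nonneg_of_le_pi (sqrt_nonneg _) ((sqrt_le_left pi_pos.le).2 hV)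
          (sqrt_le_sqrt hφV)
    _ ≤ ∑ j ∈ s, p j * cos (φ j) := hjensen
    _ ≤ ∑ j ∈ s, p j * cos (θ j) :=
        sum_le_sum fun j hj ↦ mul_le_mul_of_nonneg_left (cos_min_abs_pi_le_cos _) (hp j hj)

lemma arccos_norm_sum_mul_exp_le {ι : Type*} (s : Finset ι) {p : ι → ℝ}
    (hp : ∀ j ∈ s, 0 ≤ p j) (hp1 : ∑ j ∈ s, p j = 1) (θ : ι → ℝ) :
    arccos ‖∑ j ∈ s, (p j : ℂ) * Complex.exp (θ j * Complex.I)‖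
      ≤ √(∑ j ∈ s, p j * θ j ^ 2) := by
  by_cases hV : ∑ j ∈ s, p j * θ j ^ 2 ≤ π ^ 2
  · have hre : ∑ j ∈ s, p j * cos (θ j)
        = (∑ j ∈ s, (p j : ℂ) * Complex.exp (θ j * Complex.I)).re := by
      simp only [Complex.re_sum, Complex.re_ofReal_mul, Complex.exp_ofReal_mul_I_re]
    calc arccos ‖∑ j ∈ s, (p j : ℂ) * Complex.exp (θ j * Complex.I)‖
        ≤ arccos (cos √(∑ j ∈ s, p j * θ j ^ 2)) := by
          refine arccos_le_arccos ((cos_sqrt_le_sum_mul_cos s hp hp1 θ hV).trans ?_)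
          rw [hre]; exact Complex.re_le_norm _
      _ = √(∑ j ∈ s, p j * θ j ^ 2) :=
          arccos_cos (sqrt_nonneg _) ((sqrt_le_left pi_pos.le).2 hV)
  · exact (arccos_le_pi _).trans ((le_sqrt' pi_pos).2 (not_le.1 hV).le)

lemma sum_mul_sub_mean_sq {ι : Type*} (s : Finset ι) {p : ι → ℝ} (hp1 : ∑ j ∈ s, p j = 1)
    (x : ι → ℝ) :
    ∑ j ∈ s, p j * (x j - ∑ k ∈ s, p k * x k) ^ 2
      = ∑ j ∈ s, p j * x j ^ 2 - (∑ j ∈ s, p j * x j) ^ 2 := by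
  set m := ∑ k ∈ s, p k * x k
  have h : ∀ j, p j * (x j - m) ^ 2 = p j * x j ^ 2 - 2 * m * (p j * x j) + m ^ 2 * p j :=
    fun j ↦ by ring
  simp only [h, sum_add_distrib, sum_sub_distrib, ← mul_sum, hp1]
  ring

theorem stmt15 (n : ℕ) (a : Fin n → ℂ) (ha : ∑ j, ‖a j‖ ^ 2 = 1)
    (E : Fin n → ℝ) (τ : ℝ) (hτ : 0 ≤ τ) :
    (∀ Er : ℝ,
      (Real.arccos
        ‖∑ j, ((‖a j‖ ^ 2 : ℝ) : ℂ) * Complex.exp (-Complex.I * (E j : ℂ) * (τ : ℂ))‖) ^ 2 ≤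
      τ ^ 2 * ∑ j, ‖a j‖ ^ 2 * (E j - Er) ^ 2) ∧
    Real.arccos
        ‖∑ j, ((‖a j‖ ^ 2 : ℝ) : ℂ) * Complex.exp (-Complex.I * (E j : ℂ) * (τ : ℂ))‖ ≤
      τ * Real.sqrt (∑ j, ‖a j‖ ^ 2 * E j ^ 2 - (∑ j, ‖a j‖ ^ 2 * E j) ^ 2) := by
  set F := ‖∑ j, ((‖a j‖ ^ 2 : ℝ) : ℂ) * Complex.exp (-Complex.I * (E j : ℂ) * (τ : ℂ))‖
  have hshift (Er : ℝ) :
      F = ‖∑ j, ((‖a j‖ ^ 2 : ℝ) : ℂ) * Complex.exp (((Er - E j) * τ : ℝ) * Complex.I)‖ := by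
    rw [← one_mul F, ← Complex.norm_exp_ofReal_mul_I (Er * τ), ← norm_mul, mul_sum]
    congr 1
    refine sum_congr rfl fun j _ ↦ ?_
    rw [mul_left_comm, ← Complex.exp_add]
    push_cast
    ring_nf
  have harccos_le (Er : ℝ) : arccos F ≤ τ * √(∑ j, ‖a j‖ ^ 2 * (E j - Er) ^ 2) := by
    have h := arccos_norm_sum_mul_exp_le univ (fun j _ ↦ sq_nonneg ‖a j‖) ha
      (fun j ↦ (Er - E j) * τ)
    have hV : ∑ j, ‖a j‖ ^ 2 * ((Er - E j) * τ) ^ 2 = τ ^ 2 * ∑ j, ‖a j‖ ^ 2 * (E j - Er) ^ 2 := by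
      rw [mul_sum]; exact sum_congr rfl fun j _ ↦ by ring
    rwa [← hshift, hV, sqrt_mul (sq_nonneg τ), sqrt_sq hτ] at h
  refine ⟨fun Er ↦ ?_, ?_⟩
  · calc arccos F ^ 2 ≤ (τ * √(∑ j, ‖a j‖ ^ 2 * (E j - Er) ^ 2)) ^ 2 :=
          pow_le_pow_left₀ (arccos_nonneg _) (harccos_le Er) 2
      _ = τ ^ 2 * ∑ j, ‖a j‖ ^ 2 * (E j - Er) ^ 2 := by
          rw [mul_pow, sq_sqrt (sum_nonneg fun j _ ↦ by positivity)]
  · rw [← sum_mul_sub_mean_sq univ ha E]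
    exact harccos_le _
end

section
/- Let n ∈ ℕ, let a : Fin n → ℂ satisfy ∑_j ‖a_j‖² = 1, let E : Fin n → ℝ, let τ ≥ 0, and set √ε = ‖∑_j ‖a_j‖²·exp(−i·E_j·τ)‖. Suppose (p, q, θ) lies in (0,1]×(0,1]×[−π/2,π/2] ∪ (0,1]×(1,2]×[0,π/2] ∪ (1,2]×(0,1]×[−π/2,0] ∪ (1,2]×(1,2]×{0}. Then for every E_r ∈ ℝ: √ε ≥ cos θ − (A_{p,θ}·∑_{j : E_j ≥ E_r} ‖a_j‖²·(E_j − E_r)^p·τ^p + A_{q,−θ}·∑_{j : E_j < E_r} ‖a_j‖²·(E_r − E_j)^q·τ^q). -/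
/-!
Multiplying the overlap by the phase `exp (i (E_r τ - θ))` does not change its norm, and the real
part of the result is `∑ j, ‖a j‖² cos (x_j + θ)` with `x_j = (E_j - E_r) τ`. By the definition of
`A`, `cos θ - cos (x + θ) ≤ A_{p,θ} x^p` for `0 ≤ x < π - θ`; for `x ≥ π - θ` the left side is at
most `cos θ + 1`, which is the value of the quotient at the excluded endpoint `x = π`. Applied at
`-θ`, the same bound handles `x ≤ 0` with exponent `q`. Averaging with the weights `‖a j‖²` gives
the claim. In the parameter region both suprema are finite, because near `x = θ` the numerator is
`O(x - θ)` in general and `O((x - θ)²)` when `sin θ ≤ 0`.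
-/

open Real Set Finset

lemma cos_sub_cos_le_abs_sub (θ y : ℝ) : cos θ - cos y ≤ |y - θ| :=
  (le_abs_self _).trans ((abs_cos_sub_cos_le θ y).trans_eq (abs_sub_comm θ y))

lemma cos_sub_cos_le_sq_div_two {θ y : ℝ} (hθ : sin θ ≤ 0) (hy : θ ≤ y) :
    cos θ - cos y ≤ (y - θ) ^ 2 / 2 := by
  -- `sin x ≤ sin θ + (x - θ) ≤ x - θ`, so `f` is monotone on `[θ, ∞)`.
  let f : ℝ → ℝ := fun x => cos x + (x - θ) ^ 2 / 2
  have hf : ∀ x, HasDerivAt f (x - θ - sin x) x := fun x =>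
    ((hasDerivAt_cos x).add ((((hasDerivAt_id x).sub_const θ).pow 2).div_const 2)).congr_deriv
      (by simp only [id_eq, Nat.cast_ofNat]; ring)
  have hmono : MonotoneOn f (Ici θ) := by
    refine monotoneOn_of_deriv_nonneg (convex_Ici θ)
      (fun x _ => (hf x).continuousAt.continuousWithinAt)
      (fun x _ => (hf x).differentiableAt.differentiableWithinAt) fun x hx => ?_
    rw [interior_Ici, Set.mem_Ioi] at hx
    have hsin := (le_abs_self _).trans (abs_sin_sub_sin_le x θ)
    rw [abs_of_pos (sub_pos.2 hx)] at hsin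
    rw [(hf x).deriv]
    linarith
  have := hmono self_mem_Ici hy hy
  norm_num [f] at this
  linarith

lemma bddAbove_Aset_of_le_rpow {p θ k : ℝ} (hpk : p ≤ k)
    (h : ∀ y ∈ Ioo θ π, cos θ - cos y ≤ (y - θ) ^ k) : BddAbove (Aset p θ) := by
  refine ⟨(π - θ) ^ (k - p), ?_⟩
  rintro _ ⟨y, hy, rfl⟩
  have ht : 0 < y - θ := sub_pos.2 hy.1
  calc (cos θ - cos y) / (y - θ) ^ p ≤ (y - θ) ^ k / (y - θ) ^ p :=
        div_le_div_of_nonneg_right (h y hy) (rpow_nonneg ht.le p)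
    _ = (y - θ) ^ (k - p) := (rpow_sub ht k p).symm
    _ ≤ (π - θ) ^ (k - p) := rpow_le_rpow ht.le (by linarith [hy.2]) (sub_nonneg.2 hpk)

structure IsAdmissible (p θ : ℝ) : Prop where
  nonneg : 0 ≤ p
  lt_pi : θ < π
  bddAbove : BddAbove (Aset p θ)

namespace IsAdmissible

lemma of_le_one {p θ : ℝ} (hp : 0 ≤ p) (hp1 : p ≤ 1) (hθ : θ < π) : IsAdmissible p θ :=
  ⟨hp, hθ, bddAbove_Aset_of_le_rpow hp1 fun y hy => by
    simpa [abs_of_pos (sub_pos.2 hy.1)] using cos_sub_cos_le_abs_sub θ y⟩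

lemma of_sin_nonpos {p θ : ℝ} (hp : 0 ≤ p) (hp2 : p ≤ 2) (hθ : θ < π) (hs : sin θ ≤ 0) :
    IsAdmissible p θ :=
  ⟨hp, hθ, bddAbove_Aset_of_le_rpow hp2 fun y hy => by
    have := cos_sub_cos_le_sq_div_two hs hy.1.le
    rw [rpow_two]
    nlinarith [sq_nonneg (y - θ)]⟩

variable {p θ : ℝ} (h : IsAdmissible p θ)
include h

lemma le_A {x : ℝ} (hx : x ∈ Ioo θ π) : (cos θ - cos x) / (x - θ) ^ p ≤ A p θ :=
  le_csSup h.bddAbove ⟨x, hx, rfl⟩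

/-- The endpoint `x = π` is excluded from `Aset`, but the quotient is continuous there. -/
lemma cos_add_one_div_le_A : (cos θ + 1) / (π - θ) ^ p ≤ A p θ := by
  have hπθ : 0 < π - θ := sub_pos.2 h.lt_pi
  have hcont : ContinuousWithinAt (fun x => (cos θ - cos x) / (x - θ) ^ p) (Ioo θ π) π :=
    ((continuous_const.sub continuous_cos).continuousAt.div
      ((continuousAt_id.sub continuousAt_const).rpow_const (Or.inl hπθ.ne'))
      (rpow_pos_of_pos hπθ p).ne').continuousWithinAt
  have hmem : π ∈ closure (Ioo θ π) := by
    rw [closure_Ioo h.lt_pi.ne]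
    exact ⟨h.lt_pi.le, le_rfl⟩
  have := isClosed_Iic.closure_subset_iff.2 (fun _ hv => le_csSup h.bddAbove hv)
    (hcont.mem_closure_image hmem)
  simpa [A, cos_pi] using this

lemma A_nonneg : 0 ≤ A p θ :=
  (div_nonneg (by linarith [neg_one_le_cos θ]) (rpow_nonneg (sub_pos.2 h.lt_pi).le p)).trans
    h.cos_add_one_div_le_A

lemma cos_sub_cos_add_le {x : ℝ} (hx : 0 ≤ x) : cos θ - cos (x + θ) ≤ A p θ * x ^ p := by
  have hπθ : 0 < π - θ := sub_pos.2 h.lt_pi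
  rcases lt_or_ge x (π - θ) with hlt | hge
  · rcases hx.eq_or_lt with rfl | hpos
    · simpa using mul_nonneg h.A_nonneg (rpow_nonneg le_rfl p)
    · have := h.le_A (x := x + θ) ⟨by linarith, by linarith⟩
      rwa [add_sub_cancel_right, div_le_iff₀ (rpow_pos_of_pos hpos p)] at this
  · calc cos θ - cos (x + θ) ≤ cos θ + 1 := by linarith [neg_one_le_cos (x + θ)]
      _ ≤ A p θ * (π - θ) ^ p := (div_le_iff₀ (rpow_pos_of_pos hπθ p)).1 h.cos_add_one_div_le_A
      _ ≤ A p θ * x ^ p :=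
        mul_le_mul_of_nonneg_left (rpow_le_rpow hπθ.le hge h.nonneg) h.A_nonneg

end IsAdmissible

lemma IsAdmissible.cos_sub_cos_neg_add_le {q θ : ℝ} (h : IsAdmissible q (-θ)) {x : ℝ}
    (hx : 0 ≤ x) : cos θ - cos (-x + θ) ≤ A q (-θ) * x ^ q := by
  rw [← cos_neg (-x + θ), neg_add_rev, neg_neg, add_comm, ← cos_neg θ]
  exact h.cos_sub_cos_add_le hx

lemma isAdmissible_of_mem_region {p q θ : ℝ}
    (hpqθ :
      (p ∈ Ioc (0 : ℝ) 1 ∧ q ∈ Ioc (0 : ℝ) 1 ∧ θ ∈ Icc (-(π / 2)) (π / 2)) ∨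
      (p ∈ Ioc (0 : ℝ) 1 ∧ q ∈ Ioc (1 : ℝ) 2 ∧ θ ∈ Icc (0 : ℝ) (π / 2)) ∨
      (p ∈ Ioc (1 : ℝ) 2 ∧ q ∈ Ioc (0 : ℝ) 1 ∧ θ ∈ Icc (-(π / 2)) (0 : ℝ)) ∨
      (p ∈ Ioc (1 : ℝ) 2 ∧ q ∈ Ioc (1 : ℝ) 2 ∧ θ = 0)) :
    IsAdmissible p θ ∧ IsAdmissible q (-θ) := by
  have hπ := pi_pos
  rcases hpqθ with ⟨hp, hq, hθ⟩ | ⟨hp, hq, hθ⟩ | ⟨hp, hq, hθ⟩ | ⟨hp, hq, rfl⟩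
  · exact ⟨.of_le_one hp.1.le hp.2 (by linarith [hθ.2]),
      .of_le_one hq.1.le hq.2 (by linarith [hθ.1])⟩
  · have hs : sin (-θ) ≤ 0 := by
      rw [sin_neg, neg_nonpos]
      exact sin_nonneg_of_nonneg_of_le_pi hθ.1 (by linarith [hθ.2])
    exact ⟨.of_le_one hp.1.le hp.2 (by linarith [hθ.2]),
      .of_sin_nonpos (by linarith [hq.1]) hq.2 (by linarith [hθ.1]) hs⟩
  · have hs : sin θ ≤ 0 := sin_nonpos_of_nonpos_of_neg_pi_le hθ.2 (by linarith [hθ.1])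
    exact ⟨.of_sin_nonpos (by linarith [hp.1]) hp.2 (by linarith [hθ.2]) hs,
      .of_le_one hq.1.le hq.2 (by linarith [hθ.1])⟩
  · exact ⟨.of_sin_nonpos (by linarith [hp.1]) hp.2 hπ (by simp),
      .of_sin_nonpos (by linarith [hq.1]) hq.2 (by simpa using hπ) (by simp)⟩

lemma sum_mul_cos_add_le_norm {ι : Type*} (s : Finset ι) (w x : ι → ℝ) (φ : ℝ) :
    ∑ j ∈ s, w j * cos (x j + φ) ≤ ‖∑ j ∈ s, (w j : ℂ) * Complex.exp (x j * Complex.I)‖ := by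
  have hphase : ∀ j, Complex.exp (φ * Complex.I) * ((w j : ℂ) * Complex.exp (x j * Complex.I))
      = w j * Complex.exp ((x j + φ : ℝ) * Complex.I) := fun j => by
    rw [mul_left_comm, ← Complex.exp_add]
    push_cast
    ring_nf
  calc ∑ j ∈ s, w j * cos (x j + φ)
      = (Complex.exp (φ * Complex.I) * ∑ j ∈ s, (w j : ℂ) * Complex.exp (x j * Complex.I)).re := by
        simp only [Finset.mul_sum, hphase, Complex.re_sum, Complex.re_ofReal_mul,
          Complex.exp_ofReal_mul_I_re]
    _ ≤ ‖Complex.exp (φ * Complex.I) * ∑ j ∈ s, (w j : ℂ) * Complex.exp (x j * Complex.I)‖ :=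
        Complex.re_le_norm _
    _ = _ := by rw [norm_mul, Complex.norm_exp_ofReal_mul_I, one_mul]

lemma sub_sum_filter_add_sum_filter_not_le {ι : Type*} (s : Finset ι) (P : ι → Prop)
    [DecidablePred P] {w f g c : ι → ℝ} {c₀ : ℝ} (hw : ∀ j ∈ s, 0 ≤ w j)
    (hsum : ∑ j ∈ s, w j = 1) (hf : ∀ j ∈ s, P j → c₀ - c j ≤ f j)
    (hg : ∀ j ∈ s, ¬ P j → c₀ - c j ≤ g j) :
    c₀ - (∑ j ∈ s with P j, w j * f j + ∑ j ∈ s with ¬ P j, w j * g j) ≤ ∑ j ∈ s, w j * c j := by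
  have hc₀ : ∑ j ∈ s with P j, w j * c₀ + ∑ j ∈ s with ¬ P j, w j * c₀ = c₀ := by
    rw [sum_filter_add_sum_filter_not, ← sum_mul, hsum, one_mul]
  have hP : ∑ j ∈ s with P j, w j * c₀ - ∑ j ∈ s with P j, w j * f j
      ≤ ∑ j ∈ s with P j, w j * c j := by
    rw [← sum_sub_distrib]
    refine sum_le_sum fun j hj => ?_
    rw [mem_filter] at hj
    nlinarith [hf j hj.1 hj.2, hw j hj.1]
  have hnP : ∑ j ∈ s with ¬ P j, w j * c₀ - ∑ j ∈ s with ¬ P j, w j * g j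
      ≤ ∑ j ∈ s with ¬ P j, w j * c j := by
    rw [← sum_sub_distrib]
    refine sum_le_sum fun j hj => ?_
    rw [mem_filter] at hj
    nlinarith [hg j hj.1 hj.2, hw j hj.1]
  rw [← sum_filter_add_sum_filter_not s P]
  linarith

lemma mul_sum_mul_rpow_mul_rpow {ι : Type*} (s : Finset ι) (w u : ι → ℝ) (hu : ∀ j ∈ s, 0 ≤ u j)
    (c p : ℝ) {τ : ℝ} (hτ : 0 ≤ τ) :
    c * (∑ j ∈ s, w j * u j ^ p) * τ ^ p = ∑ j ∈ s, w j * (c * (u j * τ) ^ p) := by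
  rw [mul_sum, sum_mul]
  refine sum_congr rfl fun j hj => ?_
  rw [mul_rpow (hu j hj) hτ]
  ring

theorem stmt16 (n : ℕ) (a : Fin n → ℂ) (ha : ∑ j, ‖a j‖ ^ 2 = 1)
    (E : Fin n → ℝ) (τ : ℝ) (hτ : 0 ≤ τ) (p q θ : ℝ)
    (hpqθ :
      (p ∈ Set.Ioc (0 : ℝ) 1 ∧ q ∈ Set.Ioc (0 : ℝ) 1 ∧
        θ ∈ Set.Icc (-(Real.pi / 2)) (Real.pi / 2)) ∨
      (p ∈ Set.Ioc (0 : ℝ) 1 ∧ q ∈ Set.Ioc (1 : ℝ) 2 ∧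
        θ ∈ Set.Icc (0 : ℝ) (Real.pi / 2)) ∨
      (p ∈ Set.Ioc (1 : ℝ) 2 ∧ q ∈ Set.Ioc (0 : ℝ) 1 ∧
        θ ∈ Set.Icc (-(Real.pi / 2)) (0 : ℝ)) ∨
      (p ∈ Set.Ioc (1 : ℝ) 2 ∧ q ∈ Set.Ioc (1 : ℝ) 2 ∧ θ = 0)) :
    ∀ Er : ℝ,
      Real.cos θ -
        (A p θ * (∑ j ∈ Finset.univ.filter (fun j => Er ≤ E j),
            ‖a j‖ ^ 2 * (E j - Er) ^ p) * τ ^ p +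
          A q (-θ) * (∑ j ∈ Finset.univ.filter (fun j => E j < Er),
            ‖a j‖ ^ 2 * (Er - E j) ^ q) * τ ^ q) ≤
      ‖∑ j, ((‖a j‖ ^ 2 : ℝ) : ℂ) * Complex.exp (-Complex.I * (E j : ℂ) * (τ : ℂ))‖ := by
  obtain ⟨hpθ, hqθ⟩ := isAdmissible_of_mem_region hpqθ
  intro Er
  have hbound := sub_sum_filter_add_sum_filter_not_le univ (fun j => Er ≤ E j)
    (w := fun j => ‖a j‖ ^ 2) (c := fun j => cos ((E j - Er) * τ + θ))
    (f := fun j => A p θ * ((E j - Er) * τ) ^ p) (g := fun j => A q (-θ) * ((Er - E j) * τ) ^ q)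
    (fun j _ => by positivity) ha
    (fun j _ hj => hpθ.cos_sub_cos_add_le (mul_nonneg (sub_nonneg.2 hj) hτ))
    (fun j _ hj => by
      convert hqθ.cos_sub_cos_neg_add_le (mul_nonneg (sub_nonneg.2 (not_le.1 hj).le) hτ) using 3
      ring)
  simp only [not_le] at hbound
  rw [mul_sum_mul_rpow_mul_rpow _ _ _ (fun j hj => sub_nonneg.2 (mem_filter.1 hj).2) _ _ hτ,
    mul_sum_mul_rpow_mul_rpow _ _ _ (fun j hj => sub_nonneg.2 (mem_filter.1 hj).2.le) _ _ hτ]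
  calc _ ≤ ∑ j, ‖a j‖ ^ 2 * cos ((E j - Er) * τ + θ) := hbound
    _ = ∑ j, ‖a j‖ ^ 2 * cos (-E j * τ + (Er * τ - θ)) :=
        sum_congr rfl fun j _ => by rw [← cos_neg]; ring_nf
    _ ≤ ‖∑ j, ((‖a j‖ ^ 2 : ℝ) : ℂ) * Complex.exp ((-E j * τ : ℝ) * Complex.I)‖ :=
        sum_mul_cos_add_le_norm _ _ _ _
    _ = _ := by
        congr 1
        refine sum_congr rfl fun j _ => ?_
        push_cast
        ring_nf
end

section
/- Let p ∈ (0,1] and θ ∈ [−π/2, π/2], and set φ = φ_p(θ). Then sin²φ − p + p·cos θ·cos φ ≤ 0, with equality if and only if p = 1 and θ = π/2. -/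
/-!
With `g_a(x) = cos x - cos a + (x - a) sin x` we have `g_a'(x) = (x - a) cos x`, so `g_a` increases
on `[a, π/2]` and decreases on `[π/2, π]`. As `p ≤ 1`, the equation defining `φ` forces
`g_{|θ|}(φ) ≤ 0`, hence `φ > π/2`. On a solution,
`(sin²φ - p + p cos θ cos φ)(cos θ - cos φ) = -sin φ · N(φ)` with
`N(x) = (x - θ)(1 - cos θ cos x) - sin x (cos θ - cos x)`, and `N` increases on `[π/2, π]` from
`N(π/2) = π/2 - θ - cos θ ≥ 0`, so the expression is negative. For `p = 1`, `θ = π/2` the equation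
reads `g_{π/2}(φ) = 0`, which has no root in `(π/2, π)`.
-/

open Real Set

noncomputable section

def cosGap (a x : ℝ) : ℝ := cos x - cos a + (x - a) * sin x

def cosGapCofactor (θ x : ℝ) : ℝ := (x - θ) * (1 - cos θ * cos x) - sin x * (cos θ - cos x)

end

lemma hasDerivAt_cosGap (a x : ℝ) : HasDerivAt (cosGap a) ((x - a) * cos x) x := by
  have h := ((hasDerivAt_cos x).sub_const (cos a)).add
    (((hasDerivAt_id x).sub_const a).mul (hasDerivAt_sin x))
  exact h.congr_deriv (by simp only [id]; ring)

lemma cosGap_self (a : ℝ) : cosGap a a = 0 := by simp [cosGap]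

lemma strictMonoOn_cosGap {a : ℝ} (ha : -(π / 2) ≤ a) :
    StrictMonoOn (cosGap a) (Icc a (π / 2)) := by
  refine strictMonoOn_of_deriv_pos (convex_Icc _ _)
    (fun x _ => (hasDerivAt_cosGap a x).continuousAt.continuousWithinAt) fun x hx => ?_
  rw [interior_Icc] at hx
  rw [(hasDerivAt_cosGap a x).deriv]
  exact mul_pos (by linarith [hx.1]) (cos_pos_of_mem_Ioo ⟨by linarith [hx.1], hx.2⟩)

lemma strictAntiOn_cosGap {a : ℝ} (ha : a ≤ π / 2) :
    StrictAntiOn (cosGap a) (Icc (π / 2) π) := by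
  refine strictAntiOn_of_deriv_neg (convex_Icc _ _)
    (fun x _ => (hasDerivAt_cosGap a x).continuousAt.continuousWithinAt) fun x hx => ?_
  rw [interior_Icc] at hx
  rw [(hasDerivAt_cosGap a x).deriv]
  exact mul_neg_of_pos_of_neg (by linarith [hx.1])
    (cos_neg_of_pi_div_two_lt_of_lt hx.1 (by linarith [hx.2, pi_pos]))

lemma hasDerivAt_cosGapCofactor (θ x : ℝ) :
    HasDerivAt (cosGapCofactor θ)
      (2 * cos x * (cos x - cos θ) + (x - θ) * (cos θ * sin x)) x := by
  have h := (((hasDerivAt_id x).sub_const θ).mul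
      ((hasDerivAt_const x (1 : ℝ)).sub ((hasDerivAt_cos x).const_mul (cos θ)))).sub
    ((hasDerivAt_sin x).mul ((hasDerivAt_const x (cos θ)).sub (hasDerivAt_cos x)))
  exact h.congr_deriv <| by
    simp only [id, Pi.sub_apply]
    linear_combination (-1 : ℝ) * sin_sq_add_cos_sq x

lemma strictMonoOn_cosGapCofactor {θ : ℝ} (hθ : θ ≤ π / 2) (hcos : 0 ≤ cos θ) :
    StrictMonoOn (cosGapCofactor θ) (Icc (π / 2) π) := by
  refine strictMonoOn_of_deriv_pos (convex_Icc _ _)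
    (fun x _ => (hasDerivAt_cosGapCofactor θ x).continuousAt.continuousWithinAt) fun x hx => ?_
  rw [interior_Icc] at hx
  rw [(hasDerivAt_cosGapCofactor θ x).deriv]
  have hc : cos x < 0 := cos_neg_of_pi_div_two_lt_of_lt hx.1 (by linarith [hx.2, pi_pos])
  have hs : 0 < sin x := sin_pos_of_pos_of_lt_pi (by linarith [pi_pos, hx.1]) hx.2
  have hxθ : 0 < x - θ := by linarith [hx.1]
  nlinarith [mul_nonneg hcos hs.le]

lemma cosGapCofactor_pi_div_two_nonneg {θ : ℝ} (hθ : θ ≤ π / 2) :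
    0 ≤ cosGapCofactor θ (π / 2) := by
  have h : sin (π / 2 - θ) ≤ π / 2 - θ := sin_le (by linarith)
  rw [sin_pi_div_two_sub] at h
  simp only [cosGapCofactor, cos_pi_div_two, sin_pi_div_two]
  linarith

lemma cos_lt_cos_of_abs_lt_s17 {θ φ : ℝ} (hθφ : |θ| < φ) (hφ : φ ≤ π) : cos φ < cos θ := by
  rw [← cos_abs θ]
  exact cos_lt_cos_of_nonneg_of_le_pi (abs_nonneg θ) hφ hθφ

lemma pi_div_two_lt_of_phi_eq {p θ φ : ℝ} (hp : p ≤ 1) (hθ : -(π / 2) ≤ θ ∧ θ ≤ π / 2)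
    (hφ : |θ| < φ ∧ φ < π) (heq : p * (cos φ - cos θ) + (φ - θ) * sin φ = 0) :
    π / 2 < φ := by
  by_contra! hle
  have habs : |θ| ≤ π / 2 := abs_le.mpr hθ
  have hgap : 0 < cosGap |θ| φ := by
    simpa [cosGap_self] using strictMonoOn_cosGap (by linarith [abs_nonneg θ])
      (left_mem_Icc.mpr habs) ⟨hφ.1.le, hle⟩ hφ.1
  have hs : 0 < sin φ := sin_pos_of_pos_of_lt_pi ((abs_nonneg θ).trans_lt hφ.1) hφ.2
  have hcos : cos φ < cos θ := cos_lt_cos_of_abs_lt_s17 hφ.1 hφ.2.le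
  rw [cosGap, cos_abs] at hgap
  nlinarith [mul_nonneg (sub_nonneg.mpr (le_abs_self θ)) hs.le,
    mul_nonneg (sub_nonneg.mpr hp) (sub_nonneg.mpr hcos.le)]

lemma mul_cos_sub_cos_eq_neg_sin_mul_cosGapCofactor {p θ φ : ℝ}
    (heq : p * (cos φ - cos θ) + (φ - θ) * sin φ = 0) :
    (sin φ ^ 2 - p + p * cos θ * cos φ) * (cos θ - cos φ) = -(sin φ * cosGapCofactor θ φ) := by
  rw [cosGapCofactor]
  linear_combination (1 - cos θ * cos φ) * heq

theorem stmt17 (p θ φ : ℝ) (hp : p ∈ Set.Ioc (0 : ℝ) 1)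
    (hθ : θ ∈ Set.Icc (-(Real.pi / 2)) (Real.pi / 2))
    (hφ : φ ∈ Set.Ioo |θ| Real.pi ∧
      p * (Real.cos φ - Real.cos θ) + (φ - θ) * Real.sin φ = 0) :
    Real.sin φ ^ 2 - p + p * Real.cos θ * Real.cos φ ≤ 0 ∧
    (Real.sin φ ^ 2 - p + p * Real.cos θ * Real.cos φ = 0 ↔ p = 1 ∧ θ = Real.pi / 2) := by
  obtain ⟨hφ, heq⟩ := hφ
  have hφπ := pi_div_two_lt_of_phi_eq hp.2 hθ hφ heq
  have hmem : φ ∈ Icc (π / 2) π := ⟨hφπ.le, hφ.2.le⟩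
  have hcofactor : 0 < cosGapCofactor θ φ :=
    (cosGapCofactor_pi_div_two_nonneg hθ.2).trans_lt <|
      strictMonoOn_cosGapCofactor hθ.2 (cos_nonneg_of_mem_Icc hθ)
        (left_mem_Icc.mpr (by linarith [pi_pos])) hmem hφπ
  have hs : 0 < sin φ := sin_pos_of_pos_of_lt_pi (by linarith [pi_pos]) hφ.2
  have hcos : cos φ < cos θ := cos_lt_cos_of_abs_lt_s17 hφ.1 hφ.2.le
  have hneg : sin φ ^ 2 - p + p * cos θ * cos φ < 0 := by
    have := mul_cos_sub_cos_eq_neg_sin_mul_cosGapCofactor heq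
    nlinarith [mul_pos hs hcofactor]
  refine ⟨hneg.le, fun h => absurd h hneg.ne, ?_⟩
  rintro ⟨rfl, rfl⟩
  have hgap := strictAntiOn_cosGap le_rfl (left_mem_Icc.mpr (by linarith [pi_pos])) hmem hφπ
  simp only [cosGap, cos_pi_div_two, one_mul] at hgap heq
  linarith
end
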